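/- arXiv:math/0611110 — 13 statements merged into one kernel-verified Lean document; each statement's English description precedes it below -/
import Mathlib

section
/- For distinct points x, y, z in ℝⁿ, define g_z(x) = (x−z)/|x−z|. Then ⟨g_z(x) − g_z(y), x − y⟩ = (2|x−y|²/(|x−z|+|y−z|)) · cos²((∠zyx − ∠zxy)/2), where ∠zyx denotes the angle at vertex y in triangle x,y,z. -/
/-!
With `u = x - z` and `v = y - z`, expanding the inner product gives
`(‖u‖ + ‖v‖) (1 - cos ∠xzy) = 2 (‖u‖ + ‖v‖) sin² (∠xzy / 2)`, and Mollweide's formula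
`(a + b) sin (γ / 2) = c cos ((α - β) / 2)` (sides `a, b, c` opposite the angles `α, β, γ`)
turns this into the right-hand side.
Mollweide's formula is proved in squared form from the laws of sines and cosines, which hold
for degenerate triangles too; the signs of both sides then recover the square root.
-/

open EuclideanGeometry Real

theorem InnerProductGeometry.inner_inv_norm_smul_sub_inv_norm_smul_sub
    {E : Type*} [NormedAddCommGroup E] [InnerProductSpace ℝ E] (u v : E) :
    inner ℝ (‖u‖⁻¹ • u - ‖v‖⁻¹ • v) (u - v) = (‖u‖ + ‖v‖) * (1 - cos (angle u v)) := by
  rw [cos_angle]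
  rcases eq_or_ne u 0 with rfl | hu
  · simp [real_inner_smul_left, sq, ← mul_assoc, inv_mul_mul_self]
  rcases eq_or_ne v 0 with rfl | hv
  · simp [real_inner_smul_left, sq, ← mul_assoc, inv_mul_mul_self]
  simp only [inner_sub_left, inner_sub_right, real_inner_smul_left, real_inner_self_eq_norm_sq,
    real_inner_comm u v]
  field_simp
  ring

variable {V P : Type*} [NormedAddCommGroup V] [InnerProductSpace ℝ V] [MetricSpace P]
  [NormedAddTorsor V P]

theorem EuclideanGeometry.dist_add_dist_mul_sin_angle_div_two {p₁ p₂ : P} (p₃ : P) (h : p₁ ≠ p₂) :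
    (dist p₁ p₃ + dist p₂ p₃) * sin (∠ p₁ p₃ p₂ / 2) =
      dist p₁ p₂ * cos ((∠ p₃ p₁ p₂ - ∠ p₃ p₂ p₁) / 2) := by
  have hsum : ∠ p₃ p₁ p₂ + ∠ p₃ p₂ p₁ + ∠ p₁ p₃ p₂ = π := by
    rw [angle_comm p₃ p₂ p₁, angle_comm p₁ p₃ p₂, ← angle_add_angle_add_angle_eq_pi p₃ h.symm]
    ring
  have hcos := law_cos p₁ p₃ p₂
  have hsin₁ := law_sin p₃ p₁ p₂
  have hsin₂ := law_sin p₃ p₂ p₁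
  rw [angle_comm p₂ p₃ p₁] at hsin₁
  rw [dist_comm p₂ p₁] at hsin₂
  set α := ∠ p₃ p₁ p₂
  set β := ∠ p₃ p₂ p₁
  set γ := ∠ p₁ p₃ p₂
  have hγ : cos γ = sin α * sin β - cos α * cos β := by
    rw [show γ = π - (α + β) by linarith, cos_pi_sub, cos_add]; ring
  have hsq : ((dist p₁ p₃ + dist p₂ p₃) * sin (γ / 2)) ^ 2 =
      (dist p₁ p₂ * cos ((α - β) / 2)) ^ 2 := by
    rw [mul_pow, mul_pow, sin_sq_eq_half_sub, cos_sq, mul_div_cancel₀ _ two_ne_zero,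
      mul_div_cancel₀ _ two_ne_zero, cos_sub]
    linear_combination (-(1 - cos γ) / 2) * hcos - (sin α * dist p₁ p₂) * hsin₂
      - (sin γ * dist p₁ p₃) * hsin₁ - (dist p₁ p₃ * dist p₂ p₃) * sin_sq_add_cos_sq γ
      - (dist p₁ p₂ ^ 2 / 2) * hγ
  refine (sq_eq_sq₀ ?_ ?_).mp hsq
  · exact mul_nonneg (by positivity) (sin_nonneg_of_nonneg_of_le_pi
      (by linarith [angle_nonneg p₁ p₃ p₂]) (by linarith [angle_le_pi p₁ p₃ p₂, pi_pos]))
  · exact mul_nonneg dist_nonneg (cos_nonneg_of_neg_pi_div_two_le_of_le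
      (by linarith [angle_nonneg p₃ p₁ p₂, angle_le_pi p₃ p₂ p₁])
      (by linarith [angle_le_pi p₃ p₁ p₂, angle_nonneg p₃ p₂ p₁]))

theorem stmt0_general (n : ℕ) (x y z : EuclideanSpace ℝ (Fin n))
    (hxy : x ≠ y) (hxz : x ≠ z) :
    (inner ℝ ((‖x - z‖⁻¹ • (x - z)) - (‖y - z‖⁻¹ • (y - z))) (x - y) : ℝ) =
      2 * ‖x - y‖ ^ 2 / (‖x - z‖ + ‖y - z‖) *
        Real.cos ((∠ z y x - ∠ z x y) / 2) ^ 2 := by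
  have hpos : 0 < ‖x - z‖ + ‖y - z‖ := by
    have := norm_pos_iff.mpr (sub_ne_zero.mpr hxz); positivity
  have hmollweide := dist_add_dist_mul_sin_angle_div_two z hxy
  simp only [dist_eq_norm] at hmollweide
  calc inner ℝ (‖x - z‖⁻¹ • (x - z) - ‖y - z‖⁻¹ • (y - z)) (x - y)
      = (‖x - z‖ + ‖y - z‖) * (1 - cos (∠ x z y)) := by
        rw [← sub_sub_sub_cancel_right x y z,
          InnerProductGeometry.inner_inv_norm_smul_sub_inv_norm_smul_sub]
        rfl
    _ = 2 * ((‖x - z‖ + ‖y - z‖) * sin (∠ x z y / 2)) ^ 2 / (‖x - z‖ + ‖y - z‖) := by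
        rw [mul_pow, sin_sq_eq_half_sub, mul_div_cancel₀ _ two_ne_zero]
        field_simp
    _ = _ := by
        rw [hmollweide, ← neg_sub (∠ z y x), neg_div, cos_neg]
        ring

theorem stmt0 (n : ℕ) (x y z : EuclideanSpace ℝ (Fin n))
    (hxy : x ≠ y) (hxz : x ≠ z) (hyz : y ≠ z) :
    (inner ℝ ((‖x - z‖⁻¹ • (x - z)) - (‖y - z‖⁻¹ • (y - z))) (x - y) : ℝ) =
      2 * ‖x - y‖ ^ 2 / (‖x - z‖ + ‖y - z‖) *
        Real.cos ((∠ z y x - ∠ z x y) / 2) ^ 2 :=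
  stmt0_general n x y z hxy hxz
end

section
/- For distinct points x, y, z in ℝⁿ with g_z(x) = (x−z)/|x−z|, one has |g_z(x) − g_z(y)| = (2|x−y|/(|x−z|+|y−z|)) · cos((∠zyx − ∠zxy)/2). -/
/-!
With `θ = ∠ x z y`, the unit vectors from `z` towards `x` and `y` are at angle `θ`, so their
distance is the chord `2 sin (θ / 2)`. Mollweide's formula for the triangle `x y z`,
`|x - y| cos ((∠ z y x - ∠ z x y) / 2) = (|x - z| + |y - z|) sin (θ / 2)`, turns this into the
right-hand side. Mollweide's formula follows from the law of sines and the angle sum by the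
sum-to-product identity, except in the degenerate case `θ = π`, where `z` lies between `x` and `y`.
-/

open Real EuclideanGeometry

namespace InnerProductGeometry

variable {V : Type*} [NormedAddCommGroup V] [InnerProductSpace ℝ V]

theorem norm_inv_norm_smul_sub_inv_norm_smul {x y : V} (hx : x ≠ 0) (hy : y ≠ 0) :
    ‖‖x‖⁻¹ • x - ‖y‖⁻¹ • y‖ = 2 * sin (angle x y / 2) := by
  have hangle : angle (‖x‖⁻¹ • x) (‖y‖⁻¹ • y) = angle x y := by
    rw [angle_smul_left_of_pos _ _ (by positivity), angle_smul_right_of_pos _ _ (by positivity)]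
  have hsin : 0 ≤ sin (angle x y / 2) :=
    sin_nonneg_of_nonneg_of_le_pi (by linarith [angle_nonneg x y])
      (by linarith [angle_le_pi x y, pi_pos])
  have hcos : cos (angle x y) = 1 - 2 * sin (angle x y / 2) ^ 2 := by
    have := cos_two_mul' (angle x y / 2)
    rw [mul_div_cancel₀ _ two_ne_zero] at this
    linear_combination this + sin_sq_add_cos_sq (angle x y / 2)
  have hunit {w : V} (hw : w ≠ 0) : ‖‖w‖⁻¹ • w‖ = 1 := by
    rw [norm_smul, norm_inv, norm_norm, inv_mul_cancel₀ (norm_ne_zero_iff.2 hw)]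
  have hcosine := norm_sub_sq_eq_norm_sq_add_norm_sq_sub_two_mul_norm_mul_norm_mul_cos_angle
    (‖x‖⁻¹ • x) (‖y‖⁻¹ • y)
  rw [hunit hx, hunit hy, hangle, hcos] at hcosine
  refine (sq_eq_sq₀ (norm_nonneg _) (by positivity)).1 ?_
  linear_combination hcosine

end InnerProductGeometry

namespace EuclideanGeometry

variable {V P : Type*} [NormedAddCommGroup V] [InnerProductSpace ℝ V] [MetricSpace P]
  [NormedAddTorsor V P]

/-- **Mollweide's formula**. -/
theorem dist_mul_cos_angle_sub_angle_div_two {p₁ p₂ p₃ : P} (h : p₁ ≠ p₃) :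
    dist p₁ p₂ * cos ((∠ p₃ p₂ p₁ - ∠ p₃ p₁ p₂) / 2) =
      (dist p₁ p₃ + dist p₂ p₃) * sin (∠ p₁ p₃ p₂ / 2) := by
  set α := ∠ p₃ p₁ p₂
  set β := ∠ p₃ p₂ p₁
  set γ := ∠ p₁ p₃ p₂
  have hsum : γ + β + α = π := by
    simpa only [angle_comm p₂ p₁ p₃] using angle_add_angle_add_angle_eq_pi p₂ h.symm
  have hsinα : sin α * dist p₁ p₂ = sin γ * dist p₂ p₃ := by
    simpa only [angle_comm p₂ p₃ p₁] using law_sin p₃ p₁ p₂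
  have hsinβ : sin β * dist p₁ p₂ = sin γ * dist p₁ p₃ := by
    simpa only [dist_comm p₂ p₁] using law_sin p₃ p₂ p₁
  have hα₀ : 0 ≤ α := angle_nonneg _ _ _
  have hβ₀ : 0 ≤ β := angle_nonneg _ _ _
  have hγ₀ : 0 ≤ γ := angle_nonneg _ _ _
  rcases (show γ ≤ π from angle_le_pi _ _ _).eq_or_lt with hγ | hγ
  · have hα : α = 0 := by linarith
    have hβ : β = 0 := by linarith
    rw [dist_eq_add_dist_of_angle_eq_pi hγ, hα, hβ, hγ]
    simp
  · have hcos : 0 < cos (γ / 2) := cos_pos_of_mem_Ioo ⟨by linarith, by linarith⟩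
    have hsinsum : sin β + sin α = 2 * cos (γ / 2) * cos ((β - α) / 2) := by
      rw [sin_add_sin, show (β + α) / 2 = π / 2 - γ / 2 by linarith, sin_pi_div_two_sub]
    have hsinγ : sin γ = 2 * sin (γ / 2) * cos (γ / 2) := by
      rw [← sin_two_mul, mul_div_cancel₀ _ two_ne_zero]
    refine mul_left_cancel₀ (mul_pos two_pos hcos).ne' ?_
    linear_combination (hsinβ + hsinα) - dist p₁ p₂ * hsinsum
      + (dist p₁ p₃ + dist p₂ p₃) * hsinγ

end EuclideanGeometry

theorem stmt1_general (n : ℕ) (x y z : EuclideanSpace ℝ (Fin n))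
    (hxz : x ≠ z) (hyz : y ≠ z) :
    ‖(‖x - z‖⁻¹ • (x - z)) - (‖y - z‖⁻¹ • (y - z))‖ =
      2 * ‖x - y‖ / (‖x - z‖ + ‖y - z‖) *
        Real.cos ((∠ z y x - ∠ z x y) / 2) := by
  have hchord : ‖‖x - z‖⁻¹ • (x - z) - ‖y - z‖⁻¹ • (y - z)‖ = 2 * sin (∠ x z y / 2) :=
    InnerProductGeometry.norm_inv_norm_smul_sub_inv_norm_smul
      (sub_ne_zero.2 hxz) (sub_ne_zero.2 hyz)
  have hmollweide := dist_mul_cos_angle_sub_angle_div_two (p₂ := y) hxz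
  simp only [dist_eq_norm] at hmollweide
  have hpos : 0 < ‖x - z‖ + ‖y - z‖ := by
    have := norm_pos_iff.2 (sub_ne_zero.2 hxz)
    positivity
  rw [hchord, div_mul_eq_mul_div, mul_assoc, hmollweide]
  field_simp

theorem stmt1 (n : ℕ) (x y z : EuclideanSpace ℝ (Fin n))
    (hxy : x ≠ y) (hxz : x ≠ z) (hyz : y ≠ z) :
    ‖(‖x - z‖⁻¹ • (x - z)) - (‖y - z‖⁻¹ • (y - z))‖ =
      2 * ‖x - y‖ / (‖x - z‖ + ‖y - z‖) *
        Real.cos ((∠ z y x - ∠ z x y) / 2) :=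
  stmt1_general n x y z hxz hyz
end

section
/- Let x, y, z be distinct points in ℝⁿ, let l(x,y,z) = |x−y| + |x−z| + |y−z| and τ(x,y,z) = π − max{∠zxy, ∠zyx}. Then with g_z(x) = (x−z)/|x−z|, we have (2|x−y|/(π·l(x,y,z)))·τ(x,y,z) ≤ |g_z(x) − g_z(y)| ≤ (4|x−y|/l(x,y,z))·τ(x,y,z). -/
/-! Let α, β, γ be the angles of the triangle at x, y, z and c = |x - y|. The unit vectors
g_z(x), g_z(y) enclose the angle γ, so their distance is 2 sin(γ/2). The law of sines and
sin α + sin β + sin γ = 4 cos(α/2) cos(β/2) cos(γ/2) give sin(γ/2) l = 2c cos(α/2) cos(β/2), so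
both bounds reduce to τ/(2π) ≤ cos(α/2) cos(β/2) ≤ τ/2. If α ≤ β, then cos(β/2) = sin(τ/2) lies
between τ/π and τ/2, and cos(α/2) lies between 1/2 and 1 since α ≤ π/2. -/

open Real

theorem sin_add_sin_add_sin_of_add_add_eq_pi {α β γ : ℝ} (h : α + β + γ = π) :
    sin α + sin β + sin γ = 4 * cos (α / 2) * cos (β / 2) * cos (γ / 2) := by
  obtain ⟨A, rfl⟩ : ∃ A, α = 2 * A := ⟨α / 2, by ring⟩
  obtain ⟨B, rfl⟩ : ∃ B, β = 2 * B := ⟨β / 2, by ring⟩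
  obtain rfl : γ = π - 2 * (A + B) := by linarith
  rw [sub_div, mul_div_cancel_left₀ _ two_ne_zero, mul_div_cancel_left₀ _ two_ne_zero,
    mul_div_cancel_left₀ _ two_ne_zero, sin_pi_sub, cos_pi_div_two_sub]
  simp only [sin_two_mul, sin_add, cos_add]
  linear_combination (-2 * sin A * cos A) * sin_sq_add_cos_sq B +
    (-2 * sin B * cos B) * sin_sq_add_cos_sq A

theorem cos_half_mul_cos_half_le {α β : ℝ} (hα : 0 ≤ α) (hβ : 0 ≤ β) (h : α + β ≤ π) :
    cos (α / 2) * cos (β / 2) ≤ (π - max α β) / 2 := by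
  wlog hαβ : α ≤ β generalizing α β
  · simpa only [mul_comm, max_comm] using this hβ hα (by linarith) (by linarith)
  rw [max_eq_right hαβ, ← sin_pi_div_two_sub (β / 2)]
  have hsinβ : 0 ≤ sin (π / 2 - β / 2) :=
    sin_nonneg_of_nonneg_of_le_pi (by linarith) (by linarith)
  calc cos (α / 2) * sin (π / 2 - β / 2) ≤ 1 * sin (π / 2 - β / 2) := by
        gcongr; exact cos_le_one _
    _ ≤ (π - β) / 2 := by rw [one_mul]; exact (sin_le (by linarith)).trans_eq (by ring)

theorem div_two_pi_le_cos_half_mul_cos_half {α β : ℝ} (hα : 0 ≤ α) (hβ : 0 ≤ β)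
    (h : α + β ≤ π) :
    (π - max α β) / (2 * π) ≤ cos (α / 2) * cos (β / 2) := by
  wlog hαβ : α ≤ β generalizing α β
  · simpa only [mul_comm, max_comm] using this hβ hα (by linarith) (by linarith)
  rw [max_eq_right hαβ, ← sin_pi_div_two_sub (β / 2)]
  have hcosα : 1 / 2 ≤ cos (α / 2) := by
    rw [← cos_pi_div_three]
    exact cos_le_cos_of_nonneg_of_le_pi (by linarith) (by linarith [pi_pos]) (by linarith)
  have hsinβ : (π - β) / π ≤ sin (π / 2 - β / 2) := by
    refine le_of_eq_of_le ?_ (mul_le_sin (by linarith) (by linarith))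
    field_simp
  calc (π - β) / (2 * π) = 1 / 2 * ((π - β) / π) := by field_simp
    _ ≤ cos (α / 2) * sin (π / 2 - β / 2) :=
        mul_le_mul hcosα hsinβ (div_nonneg (by linarith) pi_pos.le) (by linarith)

variable {V P : Type*} [NormedAddCommGroup V] [InnerProductSpace ℝ V]

open InnerProductGeometry in
theorem norm_inv_norm_smul_sub_inv_norm_smul {p q : V} (hp : p ≠ 0) (hq : q ≠ 0) :
    ‖‖p‖⁻¹ • p - ‖q‖⁻¹ • q‖ = 2 * sin (angle p q / 2) := by
  have hangle : angle (‖p‖⁻¹ • p) (‖q‖⁻¹ • q) = angle p q := by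
    rw [angle_smul_left_of_pos _ _ (by positivity), angle_smul_right_of_pos _ _ (by positivity)]
  have hsq := norm_sub_sq_eq_norm_sq_add_norm_sq_sub_two_mul_norm_mul_norm_mul_cos_angle
    (‖p‖⁻¹ • p) (‖q‖⁻¹ • q)
  have hp1 : ‖‖p‖⁻¹ • p‖ = 1 := by simp [norm_smul, hp]
  have hq1 : ‖‖q‖⁻¹ • q‖ = 1 := by simp [norm_smul, hq]
  rw [hp1, hq1, hangle] at hsq
  have hsin : 0 ≤ sin (angle p q / 2) :=
    sin_nonneg_of_nonneg_of_le_pi (by linarith [angle_nonneg p q])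
      (by linarith [angle_le_pi p q, pi_pos])
  have hcos : cos (angle p q) = 1 - 2 * sin (angle p q / 2) ^ 2 := by
    rw [← cos_two_mul_eq_one_sub]; ring_nf
  rw [← mul_self_inj (norm_nonneg _) (by positivity), hsq, hcos]
  ring

open EuclideanGeometry

variable [MetricSpace P] [NormedAddTorsor V P]

theorem sin_half_angle_mul_perimeter {p₁ p₂ p₃ : P} (h : p₁ ≠ p₃) :
    sin (∠ p₁ p₃ p₂ / 2) * (dist p₁ p₂ + dist p₁ p₃ + dist p₂ p₃) =
      2 * dist p₁ p₂ * cos (∠ p₃ p₁ p₂ / 2) * cos (∠ p₃ p₂ p₁ / 2) := by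
  have hsum : ∠ p₃ p₁ p₂ + ∠ p₃ p₂ p₁ + ∠ p₁ p₃ p₂ = π := by
    rw [angle_comm p₃ p₂ p₁, angle_comm p₁ p₃ p₂]
    exact angle_add_angle_add_angle_eq_pi p₂ h
  -- cos (γ / 2) cancels below unless p₃ lies between p₁ and p₂
  by_cases hγ : ∠ p₁ p₃ p₂ = π
  · have hα : ∠ p₃ p₁ p₂ = 0 := by linarith [angle_nonneg p₃ p₁ p₂, angle_nonneg p₃ p₂ p₁]
    have hβ : ∠ p₃ p₂ p₁ = 0 := by linarith [angle_nonneg p₃ p₁ p₂, angle_nonneg p₃ p₂ p₁]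
    rw [hγ, hα, hβ, dist_eq_add_dist_of_angle_eq_pi hγ, sin_pi_div_two]
    simp only [zero_div, cos_zero]
    ring
  have hcos : 0 < cos (∠ p₁ p₃ p₂ / 2) := cos_pos_of_mem_Ioo
    ⟨by linarith [angle_nonneg p₁ p₃ p₂, pi_pos], by linarith [(angle_le_pi p₁ p₃ p₂).lt_of_ne hγ]⟩
  have hsinα := law_sin p₃ p₁ p₂
  have hsinβ := law_sin p₃ p₂ p₁
  rw [angle_comm p₂ p₃ p₁] at hsinα
  rw [dist_comm p₂ p₁] at hsinβ
  have hsinγ : sin (∠ p₁ p₃ p₂) = 2 * sin (∠ p₁ p₃ p₂ / 2) * cos (∠ p₁ p₃ p₂ / 2) := by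
    rw [← sin_two_mul]; ring_nf
  refine mul_right_cancel₀ hcos.ne' ?_
  linear_combination (dist p₁ p₂ / 2) * sin_add_sin_add_sin_of_add_add_eq_pi hsum - hsinα / 2
    - hsinβ / 2 - (dist p₁ p₂ + dist p₁ p₃ + dist p₂ p₃) / 2 * hsinγ

theorem angle_add_angle_le_pi {p₁ p₂ p₃ : P} (h : p₁ ≠ p₃) : ∠ p₃ p₁ p₂ + ∠ p₃ p₂ p₁ ≤ π := by
  have := angle_add_angle_add_angle_eq_pi p₂ h
  rw [angle_comm p₁ p₂ p₃] at this
  linarith [angle_nonneg p₂ p₃ p₁]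

theorem stmt2_general (n : ℕ) (x y z : EuclideanSpace ℝ (Fin n))
    (hxz : x ≠ z) (hyz : y ≠ z) :
    2 * ‖x - y‖ / (Real.pi * (‖x - y‖ + ‖x - z‖ + ‖y - z‖)) *
        (Real.pi - max (∠ z x y) (∠ z y x)) ≤
      ‖(‖x - z‖⁻¹ • (x - z)) - (‖y - z‖⁻¹ • (y - z))‖ ∧
    ‖(‖x - z‖⁻¹ • (x - z)) - (‖y - z‖⁻¹ • (y - z))‖ ≤
      4 * ‖x - y‖ / (‖x - y‖ + ‖x - z‖ + ‖y - z‖) *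
        (Real.pi - max (∠ z x y) (∠ z y x)) := by
  have hangles := angle_add_angle_le_pi (p₂ := y) hxz
  have hτ : 0 ≤ π - max (∠ z x y) (∠ z y x) :=
    sub_nonneg.2 (max_le (angle_le_pi _ _ _) (angle_le_pi _ _ _))
  have hl : 0 < dist x y + dist x z + dist y z := by
    linarith [dist_nonneg (x := x) (y := y), dist_nonneg (x := y) (y := z), dist_pos.2 hxz]
  have hchord : ‖‖x - z‖⁻¹ • (x - z) - ‖y - z‖⁻¹ • (y - z)‖ =
      4 * dist x y / (dist x y + dist x z + dist y z) *
        (cos (∠ z x y / 2) * cos (∠ z y x / 2)) := by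
    have : ‖‖x - z‖⁻¹ • (x - z) - ‖y - z‖⁻¹ • (y - z)‖ = 2 * sin (∠ x z y / 2) :=
      norm_inv_norm_smul_sub_inv_norm_smul (sub_ne_zero.2 hxz) (sub_ne_zero.2 hyz)
    rw [this]
    field_simp
    linear_combination 2 * sin_half_angle_mul_perimeter (p₂ := y) hxz
  rw [hchord]
  simp only [← dist_eq_norm]
  constructor
  · calc _ = 4 * dist x y / (dist x y + dist x z + dist y z) *
          ((π - max (∠ z x y) (∠ z y x)) / (2 * π)) := by field_simp; ring
      _ ≤ _ := by
        gcongr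
        exact div_two_pi_le_cos_half_mul_cos_half (angle_nonneg _ _ _) (angle_nonneg _ _ _) hangles
  · gcongr
    exact (cos_half_mul_cos_half_le (angle_nonneg _ _ _) (angle_nonneg _ _ _) hangles).trans
      (half_le_self hτ)

theorem stmt2 (n : ℕ) (x y z : EuclideanSpace ℝ (Fin n))
    (hxy : x ≠ y) (hxz : x ≠ z) (hyz : y ≠ z) :
    2 * ‖x - y‖ / (Real.pi * (‖x - y‖ + ‖x - z‖ + ‖y - z‖)) *
        (Real.pi - max (∠ z x y) (∠ z y x)) ≤
      ‖(‖x - z‖⁻¹ • (x - z)) - (‖y - z‖⁻¹ • (y - z))‖ ∧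
    ‖(‖x - z‖⁻¹ • (x - z)) - (‖y - z‖⁻¹ • (y - z))‖ ≤
      4 * ‖x - y‖ / (‖x - y‖ + ‖x - z‖ + ‖y - z‖) *
        (Real.pi - max (∠ z x y) (∠ z y x)) :=
  stmt2_general n x y z hxz hyz
end

section
/- Let x, y, z be distinct points in ℝⁿ, l(x,y,z) = |x−y| + |x−z| + |y−z|, τ(x,y,z) = π − max{∠zxy, ∠zyx}, and g_z(x) = (x−z)/|x−z|. Then (2|x−y|²/(π²·l(x,y,z)))·τ(x,y,z)² ≤ ⟨g_z(x) − g_z(y), x − y⟩ ≤ (4|x−y|²/l(x,y,z))·τ(x,y,z)². -/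
/-!
Write `s = ‖x - z‖`, `t = ‖y - z‖`, `c = ‖x - y‖` and `A, B, C` for the angles at `x, y, z`.
The inner product equals `(s + t)(1 - cos C) = 2 (s + t) sin² (C / 2)`, and by Mollweide's formula
`(s + t) sin (C / 2) = c sin (min A B + C / 2)`. Since `τ = min A B + C` and
`min A B + C / 2 ∈ [τ / 2, π / 2]`, the bounds `2u / π ≤ sin u ≤ u` (Jordan) give
`c τ / π ≤ (s + t) sin (C / 2) ≤ c τ`; squaring and using `s + t ≤ l ≤ 2 (s + t)` concludes.
-/

open EuclideanGeometry InnerProductGeometry Real Set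
open scoped RealInnerProductSpace

namespace InnerProductGeometry

variable {V : Type*} [NormedAddCommGroup V] [InnerProductSpace ℝ V]

theorem inner_inv_norm_smul_sub_inv_norm_smul_sub_s3 (a b : V) :
    ⟪‖a‖⁻¹ • a - ‖b‖⁻¹ • b, a - b⟫ = 2 * (‖a‖ + ‖b‖) * sin (angle a b / 2) ^ 2 := by
  have hcos : cos (angle a b) = 1 - 2 * sin (angle a b / 2) ^ 2 := by
    rw [← cos_two_mul_eq_one_sub]; ring_nf
  rcases eq_or_ne a 0 with rfl | ha
  · simp only [angle_zero_left, cos_pi_div_two] at hcos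
    simp only [real_inner_smul_left, real_inner_self_eq_norm_mul_norm, ← mul_assoc,
      inv_mul_mul_self, norm_zero, zero_sub, smul_zero, inner_neg_neg, angle_zero_left]
    linear_combination -‖b‖ * hcos
  rcases eq_or_ne b 0 with rfl | hb
  · simp only [angle_zero_right, cos_pi_div_two] at hcos
    simp only [real_inner_smul_left, real_inner_self_eq_norm_mul_norm, ← mul_assoc,
      inv_mul_mul_self, norm_zero, sub_zero, smul_zero, angle_zero_right]
    linear_combination -‖a‖ * hcos
  simp only [inner_sub_left, inner_sub_right, real_inner_smul_left, real_inner_self_eq_norm_sq,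
    real_inner_comm a b, ← cos_angle_mul_norm_mul_norm a b, hcos]
  field_simp
  ring

end InnerProductGeometry

namespace EuclideanGeometry

variable {V P : Type*} [NormedAddCommGroup V] [InnerProductSpace ℝ V] [MetricSpace P]
  [NormedAddTorsor V P]

/-- Mollweide's formula. -/
theorem dist_add_dist_mul_sin_half_angle {p₁ p₂ p₃ : P} (h : p₂ ≠ p₃) :
    (dist p₁ p₃ + dist p₂ p₃) * sin (∠ p₁ p₃ p₂ / 2) =
      dist p₁ p₂ * sin (∠ p₃ p₂ p₁ + ∠ p₁ p₃ p₂ / 2) := by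
  set C := ∠ p₁ p₃ p₂
  have hsin : dist p₁ p₂ * sin (∠ p₃ p₂ p₁) = dist p₁ p₃ * sin C := by
    rw [dist_comm, mul_comm, law_sin, mul_comm]
  have hproj : dist p₂ p₃ = dist p₁ p₃ * cos C + dist p₁ p₂ * cos (∠ p₃ p₂ p₁) := by
    have e₁ := law_cos p₁ p₃ p₂
    have e₂ := law_cos p₁ p₂ p₃
    rw [angle_comm, dist_comm p₃ p₂] at e₂
    apply mul_left_cancel₀ (dist_pos.2 h).ne'
    linear_combination (-1 / 2 : ℝ) * e₁ - (1 / 2 : ℝ) * e₂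
  have hsinC : sin C = 2 * sin (C / 2) * cos (C / 2) := by rw [← sin_two_mul]; ring_nf
  have hcosC : cos C = cos (C / 2) ^ 2 - sin (C / 2) ^ 2 := by rw [← cos_two_mul']; ring_nf
  rw [sin_add]
  linear_combination -cos (C / 2) * hsin + sin (C / 2) * hproj
    - dist p₁ p₃ * cos (C / 2) * hsinC + dist p₁ p₃ * sin (C / 2) * hcosC
    - dist p₁ p₃ * sin (C / 2) * sin_sq_add_cos_sq (C / 2)

theorem dist_add_dist_mul_sin_half_angle_eq_min {p₁ p₂ p₃ : P} (h₁₃ : p₁ ≠ p₃) (h₂₃ : p₂ ≠ p₃) :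
    (dist p₁ p₃ + dist p₂ p₃) * sin (∠ p₁ p₃ p₂ / 2) =
      dist p₁ p₂ * sin (min (∠ p₃ p₁ p₂) (∠ p₃ p₂ p₁) + ∠ p₁ p₃ p₂ / 2) := by
  rcases le_total (∠ p₃ p₁ p₂) (∠ p₃ p₂ p₁) with hle | hle
  · have := dist_add_dist_mul_sin_half_angle (p₁ := p₂) (p₂ := p₁) h₁₃
    rw [dist_comm p₂ p₁] at this
    rw [min_eq_left hle, add_comm, angle_comm, this]
  · rw [min_eq_right hle]
    exact dist_add_dist_mul_sin_half_angle h₂₃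

theorem pi_sub_max_angle_eq_min_angle_add_angle {p₁ p₂ : P} (p₃ : P) (h : p₁ ≠ p₂) :
    π - max (∠ p₃ p₁ p₂) (∠ p₃ p₂ p₁) = min (∠ p₃ p₁ p₂) (∠ p₃ p₂ p₁) + ∠ p₁ p₃ p₂ := by
  have hsum := angle_add_angle_add_angle_eq_pi p₃ h.symm
  rw [angle_comm p₁ p₂ p₃, angle_comm p₂ p₃ p₁] at hsum
  linarith [max_add_min (∠ p₃ p₁ p₂) (∠ p₃ p₂ p₁)]

theorem dist_add_dist_mul_sin_half_angle_mem_Icc {p₁ p₂ p₃ : P} (h₁₂ : p₁ ≠ p₂)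
    (h₁₃ : p₁ ≠ p₃) (h₂₃ : p₂ ≠ p₃) :
    (dist p₁ p₃ + dist p₂ p₃) * sin (∠ p₁ p₃ p₂ / 2) ∈
      Icc (dist p₁ p₂ * (π - max (∠ p₃ p₁ p₂) (∠ p₃ p₂ p₁)) / π)
        (dist p₁ p₂ * (π - max (∠ p₃ p₁ p₂) (∠ p₃ p₂ p₁))) := by
  rw [dist_add_dist_mul_sin_half_angle_eq_min h₁₃ h₂₃,
    pi_sub_max_angle_eq_min_angle_add_angle p₃ h₁₂]
  set m := min (∠ p₃ p₁ p₂) (∠ p₃ p₂ p₁)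
  set C := ∠ p₁ p₃ p₂
  have hm : 0 ≤ m := le_min (angle_nonneg _ _ _) (angle_nonneg _ _ _)
  have hC : 0 ≤ C := angle_nonneg _ _ _
  have hsum : 2 * m + C ≤ π := by
    have := pi_sub_max_angle_eq_min_angle_add_angle p₃ h₁₂
    linarith [min_le_max (a := ∠ p₃ p₁ p₂) (b := ∠ p₃ p₂ p₁)]
  constructor
  · rw [mul_div_assoc]
    gcongr
    calc (m + C) / π ≤ 2 / π * (m + C / 2) := by
          rw [div_mul_eq_mul_div]
          gcongr
          linarith
      _ ≤ sin (m + C / 2) := mul_le_sin (by positivity) (by linarith)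
  · gcongr
    linarith [sin_le (show 0 ≤ m + C / 2 by positivity)]

end EuclideanGeometry

theorem sq_bounds_of_mul_mem_Icc {c S σ τ : ℝ} (hS : 0 < S) (hc : 0 ≤ c) (hcS : c ≤ S)
    (hτ : 0 ≤ τ) (h : S * σ ∈ Icc (c * τ / π) (c * τ)) :
    2 * c ^ 2 / (π ^ 2 * (c + S)) * τ ^ 2 ≤ 2 * S * σ ^ 2 ∧
      2 * S * σ ^ 2 ≤ 4 * c ^ 2 / (c + S) * τ ^ 2 := by
  have hσ : 2 * S * σ ^ 2 = 2 * (S * σ) ^ 2 / S := by field_simp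
  have hlo : 0 ≤ c * τ / π := by positivity
  rw [hσ]
  constructor
  · calc 2 * c ^ 2 / (π ^ 2 * (c + S)) * τ ^ 2 = 2 * (c * τ / π) ^ 2 / (c + S) := by
          field_simp
      _ ≤ 2 * (c * τ / π) ^ 2 / S := by gcongr; linarith
      _ ≤ 2 * (S * σ) ^ 2 / S := by gcongr; exact h.1
  · calc 2 * (S * σ) ^ 2 / S ≤ 2 * (c * τ) ^ 2 / S := by
          gcongr 2 * ?_ ^ 2 / S
          exacts [hlo.trans h.1, h.2]
      _ ≤ 4 * c ^ 2 / (c + S) * τ ^ 2 := by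
          rw [div_mul_eq_mul_div, div_le_div_iff₀ hS (by linarith)]
          nlinarith [sq_nonneg (c * τ)]

theorem stmt3 (n : ℕ) (x y z : EuclideanSpace ℝ (Fin n))
    (hxy : x ≠ y) (hxz : x ≠ z) (hyz : y ≠ z) :
    2 * ‖x - y‖ ^ 2 / (Real.pi ^ 2 * (‖x - y‖ + ‖x - z‖ + ‖y - z‖)) *
        (Real.pi - max (∠ z x y) (∠ z y x)) ^ 2 ≤
      (inner ℝ ((‖x - z‖⁻¹ • (x - z)) - (‖y - z‖⁻¹ • (y - z))) (x - y) : ℝ) ∧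
    (inner ℝ ((‖x - z‖⁻¹ • (x - z)) - (‖y - z‖⁻¹ • (y - z))) (x - y) : ℝ) ≤
      4 * ‖x - y‖ ^ 2 / (‖x - y‖ + ‖x - z‖ + ‖y - z‖) *
        (Real.pi - max (∠ z x y) (∠ z y x)) ^ 2 := by
  have hinner := inner_inv_norm_smul_sub_inv_norm_smul_sub_s3 (x - z) (y - z)
  rw [sub_sub_sub_cancel_right] at hinner
  have hbounds := dist_add_dist_mul_sin_half_angle_mem_Icc hxy hxz hyz
  simp only [dist_eq_norm] at hbounds
  have htri : ‖x - y‖ ≤ ‖x - z‖ + ‖y - z‖ := by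
    simpa only [norm_sub_rev z y] using norm_sub_le_norm_sub_add_norm_sub x z y
  have hτ : 0 ≤ π - max (∠ z x y) (∠ z y x) :=
    sub_nonneg.2 (max_le (angle_le_pi _ _ _) (angle_le_pi _ _ _))
  rw [hinner, add_assoc]
  exact sq_bounds_of_mul_mem_Icc
    (add_pos_of_pos_of_nonneg (norm_sub_pos_iff.2 hxz) (norm_nonneg _)) (norm_nonneg _) htri hτ
    hbounds
end

section
/- Let α = max{∠zxy, ∠zyx} for distinct points x, y, z in ℝⁿ, and τ = π − α. Then (1/π)·τ ≤ cos((∠zyx − ∠zxy)/2) ≤ τ. -/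
/-!
Write `a = ∠ z x y`, `b = ∠ z y x`; these are nonnegative with `a + b ≤ π`, and
`cos ((b - a) / 2) = cos (|b - a| / 2)` with `|b - a| = max a b - min a b`.
The lower bound is Jordan's inequality `cos t ≥ 1 - 2t/π` together with `|b - a| ≤ max a b`.
For the upper bound, if `max a b ≤ π / 2` then `cos ≤ 1 ≤ π - max a b`; otherwise
`a + b ≤ π` gives `max a b - π / 2 ≤ |b - a| / 2`, so by monotonicity of `cos` on `[0, π]`,
`cos (|b - a| / 2) ≤ cos (max a b - π / 2) = sin (π - max a b) ≤ π - max a b`.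
-/

open EuclideanGeometry Real

namespace Real

variable {a b : ℝ}

lemma cos_half_sub_eq_cos_half_abs_sub (a b : ℝ) : cos ((b - a) / 2) = cos (|b - a| / 2) := by
  rw [← cos_abs, abs_div, abs_two]

lemma abs_sub_le_max (ha : 0 ≤ a) (hb : 0 ≤ b) : |b - a| ≤ max a b := by
  rw [abs_le]
  constructor <;> linarith [le_max_left a b, le_max_right a b]

lemma pi_sub_max_div_pi_le_cos_half_sub (ha : 0 ≤ a) (hb : 0 ≤ b) (hab : a + b ≤ π) :
    1 / π * (π - max a b) ≤ cos ((b - a) / 2) := by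
  have hd := abs_sub_le_max ha hb
  have hmax : max a b ≤ π := max_le (by linarith) (by linarith)
  calc 1 / π * (π - max a b) ≤ 1 - 2 / π * (|b - a| / 2) := by
        rw [show (1 : ℝ) - 2 / π * (|b - a| / 2) = 1 / π * (π - |b - a|) by
          field_simp [pi_ne_zero]]
        gcongr
    _ ≤ cos (|b - a| / 2) := one_sub_mul_le_cos (by positivity) (by linarith)
    _ = cos ((b - a) / 2) := (cos_half_sub_eq_cos_half_abs_sub a b).symm

lemma cos_half_sub_le_pi_sub_max (ha : 0 ≤ a) (hb : 0 ≤ b) (hab : a + b ≤ π) :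
    cos ((b - a) / 2) ≤ π - max a b := by
  rcases le_or_gt (max a b) (π / 2) with hsmall | hlarge
  · linarith [cos_le_one ((b - a) / 2), two_le_pi]
  have hd := abs_sub_le_max ha hb
  have hmax : max a b ≤ π := max_le (by linarith) (by linarith)
  have hshift : max a b - π / 2 ≤ |b - a| / 2 := by
    rcases le_total a b with h | h
    · rw [max_eq_right h, abs_of_nonneg (by linarith)]; linarith
    · rw [max_eq_left h, abs_of_nonpos (by linarith)]; linarith
  calc cos ((b - a) / 2) = cos (|b - a| / 2) := cos_half_sub_eq_cos_half_abs_sub a b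
    _ ≤ cos (max a b - π / 2) :=
        cos_le_cos_of_nonneg_of_le_pi (by linarith) (by linarith) hshift
    _ = sin (π - max a b) := by rw [cos_sub_pi_div_two, sin_pi_sub]
    _ ≤ π - max a b := sin_le (by linarith)

end Real

namespace EuclideanGeometry

variable {V P : Type*} [NormedAddCommGroup V] [InnerProductSpace ℝ V] [MetricSpace P]
  [NormedAddTorsor V P]

lemma angle_add_angle_le_pi (x y z : P) : ∠ z x y + ∠ z y x ≤ π := by
  rcases eq_or_ne x y with rfl | hxy
  · simp
  have hsum := angle_add_angle_add_angle_eq_pi z hxy.symm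
  rw [angle_comm x y z] at hsum
  linarith [angle_nonneg y z x]

end EuclideanGeometry

theorem stmt4_general (n : ℕ) (x y z : EuclideanSpace ℝ (Fin n)) :
    (1 / Real.pi) * (Real.pi - max (∠ z x y) (∠ z y x)) ≤
      Real.cos ((∠ z y x - ∠ z x y) / 2) ∧
    Real.cos ((∠ z y x - ∠ z x y) / 2) ≤
      Real.pi - max (∠ z x y) (∠ z y x) :=
  have hsum := angle_add_angle_le_pi x y z
  ⟨Real.pi_sub_max_div_pi_le_cos_half_sub (angle_nonneg _ _ _) (angle_nonneg _ _ _) hsum,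
    Real.cos_half_sub_le_pi_sub_max (angle_nonneg _ _ _) (angle_nonneg _ _ _) hsum⟩

theorem stmt4 (n : ℕ) (x y z : EuclideanSpace ℝ (Fin n))
    (hxy : x ≠ y) (hxz : x ≠ z) (hyz : y ≠ z) :
    (1 / Real.pi) * (Real.pi - max (∠ z x y) (∠ z y x)) ≤
      Real.cos ((∠ z y x - ∠ z x y) / 2) ∧
    Real.cos ((∠ z y x - ∠ z x y) / 2) ≤
      Real.pi - max (∠ z x y) (∠ z y x) :=
  stmt4_general n x y z
end

section
/- Let F : Ω → ℝⁿ be defined on a convex domain Ω and δ ∈ (0,1]. Suppose that for every x ∈ Ω there exists ε(x) > 0 such that ⟨F(x) − F(y), x − y⟩ ≥ δ|F(x) − F(y)||x − y| whenever y ∈ Ω and |x − y| ≤ ε(x). Then F is δ-monotone on Ω, i.e. ⟨F(x) − F(y), x − y⟩ ≥ δ|F(x) − F(y)||x − y| for all x, y ∈ Ω. -/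
/-!
Restricted to the segment `t ↦ x + t • (y - x)`, the local condition says that `F p - F q` lies in
the cone `{u | δ * ‖u‖ * ‖x - y‖ ≤ ⟪u, x - y⟫}` for nearby points `p` before `q`. This cone is closed
under addition, so the condition telescopes along increasing parameters, and a supremum argument on
`[0, 1]` carries it from `x` all the way to `y`.
-/

open Set Filter Topology AffineMap RealInnerProductSpace

theorem rel_of_eventually_nhdsWithin_Icc {R : ℝ → ℝ → Prop} {a b : ℝ} (hab : a ≤ b)
    (htrans : ∀ s t u, a ≤ s → s ≤ t → t ≤ u → u ≤ b → R s t → R t u → R s u)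
    (hloc : ∀ s ∈ Icc a b, ∀ᶠ t in 𝓝[Icc a b] s, R s t ∧ R t s) : R a b := by
  set A := {t ∈ Icc a b | R a t}
  have haA : a ∈ A :=
    ⟨left_mem_Icc.2 hab, ((hloc a (left_mem_Icc.2 hab)).self_of_nhdsWithin (left_mem_Icc.2 hab)).1⟩
  have hA : BddAbove A := ⟨b, fun t ht => ht.1.2⟩
  set T := sSup A
  have hT : T ∈ Icc a b := ⟨le_csSup hA haA, csSup_le ⟨a, haA⟩ fun t ht => ht.1.2⟩
  obtain ⟨ε, hε, hnear⟩ : ∃ ε > 0, ∀ t ∈ Icc a b, dist t T < ε → R T t ∧ R t T := by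
    obtain ⟨ε, hε, h⟩ := Metric.eventually_nhds_iff.1 (eventually_nhdsWithin_iff.1 (hloc T hT))
    exact ⟨ε, hε, fun t ht hd => h hd ht⟩
  have hTA : R a T := by
    obtain ⟨t, htA, hTt⟩ := exists_lt_of_lt_csSup ⟨a, haA⟩ (sub_lt_self T hε)
    have htT : t ≤ T := le_csSup hA htA
    refine htrans a t T le_rfl htA.1.1 htT hT.2 htA.2 (hnear t htA.1 ?_).2
    rw [Real.dist_eq, abs_sub_comm, abs_of_nonneg (sub_nonneg.2 htT)]
    linarith
  rcases hT.2.eq_or_lt with hTb | hTb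
  · rwa [← hTb]
  set s := min b (T + ε / 2)
  have hTs : T < s := lt_min hTb (by linarith)
  have hs : s ∈ Icc a b := ⟨hT.1.trans hTs.le, min_le_left _ _⟩
  have hsT : dist s T < ε := by
    rw [Real.dist_eq, abs_of_pos (sub_pos.2 hTs)]
    linarith [min_le_right b (T + ε / 2)]
  have hsA : s ∈ A := ⟨hs, htrans a T s le_rfl hT.1 hTs.le hs.2 hTA (hnear s hs hsT).1⟩
  exact absurd (le_csSup hA hsA) hTs.not_ge

section InnerProductSpace

variable {E : Type*} [NormedAddCommGroup E] [InnerProductSpace ℝ E]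

theorem mul_norm_add_mul_norm_le_inner_add {δ : ℝ} (hδ : 0 ≤ δ) {u v w : E}
    (hu : δ * ‖u‖ * ‖w‖ ≤ ⟪u, w⟫) (hv : δ * ‖v‖ * ‖w‖ ≤ ⟪v, w⟫) :
    δ * ‖u + v‖ * ‖w‖ ≤ ⟪u + v, w⟫ :=
  calc δ * ‖u + v‖ * ‖w‖ ≤ δ * (‖u‖ + ‖v‖) * ‖w‖ := by gcongr; exact norm_add_le u v
    _ = δ * ‖u‖ * ‖w‖ + δ * ‖v‖ * ‖w‖ := by ring
    _ ≤ ⟪u + v, w⟫ := by rw [inner_add_left]; exact add_le_add hu hv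

def IsDeltaMonotonePair (δ : ℝ) (F : E → E) (x y : E) : Prop :=
  δ * ‖F x - F y‖ * ‖x - y‖ ≤ ⟪F x - F y, x - y⟫

variable {δ : ℝ} {F : E → E}

theorem IsDeltaMonotonePair.symm {x y : E} (h : IsDeltaMonotonePair δ F x y) :
    IsDeltaMonotonePair δ F y x := by
  rwa [IsDeltaMonotonePair, ← neg_sub x y, ← neg_sub (F x) (F y), inner_neg_neg, norm_neg, norm_neg]

theorem lineMap_sub_lineMap (x y : E) (s t : ℝ) :
    lineMap x y s - lineMap x y t = (t - s) • (x - y) := by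
  simp only [lineMap_apply_module']
  module

theorem isDeltaMonotonePair_lineMap_iff {x y : E} {s t : ℝ} (hst : s < t) :
    IsDeltaMonotonePair δ F (lineMap x y s) (lineMap x y t) ↔
      δ * ‖F (lineMap x y s) - F (lineMap x y t)‖ * ‖x - y‖ ≤
        ⟪F (lineMap x y s) - F (lineMap x y t), x - y⟫ := by
  have hts : 0 < t - s := sub_pos.2 hst
  rw [IsDeltaMonotonePair, lineMap_sub_lineMap, real_inner_smul_right, norm_smul,
    Real.norm_of_nonneg hts.le, mul_left_comm, mul_le_mul_iff_right₀ hts]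

theorem IsDeltaMonotonePair.trans_lineMap (hδ : 0 ≤ δ) {x y : E} {s t u : ℝ} (hst : s ≤ t)
    (htu : t ≤ u) (h₁ : IsDeltaMonotonePair δ F (lineMap x y s) (lineMap x y t))
    (h₂ : IsDeltaMonotonePair δ F (lineMap x y t) (lineMap x y u)) :
    IsDeltaMonotonePair δ F (lineMap x y s) (lineMap x y u) := by
  rcases hst.eq_or_lt with rfl | hst
  · exact h₂
  rcases htu.eq_or_lt with rfl | htu
  · exact h₁
  rw [isDeltaMonotonePair_lineMap_iff hst] at h₁
  rw [isDeltaMonotonePair_lineMap_iff htu] at h₂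
  rw [isDeltaMonotonePair_lineMap_iff (hst.trans htu), ← sub_add_sub_cancel _ (F (lineMap x y t))]
  exact mul_norm_add_mul_norm_le_inner_add hδ h₁ h₂

theorem isDeltaMonotonePair_of_local (hδ : 0 ≤ δ) {Ω : Set E} (hΩ : Convex ℝ Ω)
    (h : ∀ x ∈ Ω, ∃ ε > 0, ∀ y ∈ Ω, ‖x - y‖ ≤ ε → IsDeltaMonotonePair δ F x y) :
    ∀ x ∈ Ω, ∀ y ∈ Ω, IsDeltaMonotonePair δ F x y := by
  intro x hx y hy
  have hloc (s : ℝ) (hs : s ∈ Icc (0 : ℝ) 1) : ∀ᶠ t in 𝓝[Icc 0 1] s,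
      IsDeltaMonotonePair δ F (lineMap x y s) (lineMap x y t) ∧
        IsDeltaMonotonePair δ F (lineMap x y t) (lineMap x y s) := by
    obtain ⟨ε, hε, hε_pair⟩ := h _ (hΩ.lineMap_mem hx hy hs)
    have hnear : ∀ᶠ t in 𝓝 s, lineMap x y t ∈ Metric.closedBall (lineMap x y s) ε :=
      lineMap_continuous.continuousAt.preimage_mem_nhds (Metric.closedBall_mem_nhds _ hε)
    filter_upwards [nhdsWithin_le_nhds hnear, self_mem_nhdsWithin] with t htε ht
    have hpair := hε_pair _ (hΩ.lineMap_mem hx hy ht) (by rwa [← dist_eq_norm, dist_comm])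
    exact ⟨hpair, hpair.symm⟩
  simpa only [lineMap_apply_zero, lineMap_apply_one] using rel_of_eventually_nhdsWithin_Icc
    (R := fun s t => IsDeltaMonotonePair δ F (lineMap x y s) (lineMap x y t)) zero_le_one
    (fun _ _ _ _ hst htu _ => IsDeltaMonotonePair.trans_lineMap hδ hst htu) hloc

end InnerProductSpace

theorem stmt5_general (n : ℕ) (Ω : Set (EuclideanSpace ℝ (Fin n))) (hΩ : Convex ℝ Ω)
    (F : EuclideanSpace ℝ (Fin n) → EuclideanSpace ℝ (Fin n)) (δ : ℝ)
    (hδ0 : 0 < δ)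
    (h : ∀ x ∈ Ω, ∃ ε > 0, ∀ y ∈ Ω, ‖x - y‖ ≤ ε →
      δ * ‖F x - F y‖ * ‖x - y‖ ≤ (inner ℝ (F x - F y) (x - y) : ℝ)) :
    ∀ x ∈ Ω, ∀ y ∈ Ω,
      δ * ‖F x - F y‖ * ‖x - y‖ ≤ (inner ℝ (F x - F y) (x - y) : ℝ) :=
  isDeltaMonotonePair_of_local hδ0.le hΩ h

theorem stmt5 (n : ℕ) (Ω : Set (EuclideanSpace ℝ (Fin n))) (hΩ : Convex ℝ Ω)
    (F : EuclideanSpace ℝ (Fin n) → EuclideanSpace ℝ (Fin n)) (δ : ℝ)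
    (hδ0 : 0 < δ) (hδ1 : δ ≤ 1)
    (h : ∀ x ∈ Ω, ∃ ε > 0, ∀ y ∈ Ω, ‖x - y‖ ≤ ε →
      δ * ‖F x - F y‖ * ‖x - y‖ ≤ (inner ℝ (F x - F y) (x - y) : ℝ)) :
    ∀ x ∈ Ω, ∀ y ∈ Ω,
      δ * ‖F x - F y‖ * ‖x - y‖ ≤ (inner ℝ (F x - F y) (x - y) : ℝ) :=
  stmt5_general n Ω hΩ F δ hδ0 h
end

section
/- Let F : ℝⁿ → ℝⁿ be δ-monotone for some δ ∈ (0,1], and let γ : [0,1] → ℝⁿ be the affine parametrization of a line segment from a to b. Then the image curve F ∘ γ is rectifiable with length at most δ⁻¹|F(a) − F(b)|. -/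
/-!
Along the segment `γ t = a + t • (b - a)`, δ-monotonicity makes every increment
`F (γ t) - F (γ s)`, `s ≤ t`, lie in the cone of vectors `w` with `δ ‖w‖ ‖b - a‖ ≤ ⟪w, b - a⟫`.
So `‖F (γ t) - F (γ s)‖ ≤ φ t - φ s` for the monotone function `φ t = ⟪F (γ t), b - a⟫ / (δ ‖b - a‖)`,
and the variation of `F ∘ γ` is at most that of `φ`, which telescopes to
`⟪F b - F a, b - a⟫ / (δ ‖b - a‖) ≤ δ⁻¹ ‖F a - F b‖`.
-/

open Set

section Variation

variable {α E E' : Type*} [LinearOrder α]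

theorem eVariationOn_le_of_edist_le [PseudoEMetricSpace E] [PseudoEMetricSpace E']
    {f : α → E} {g : α → E'} {s : Set α}
    (h : ∀ x ∈ s, ∀ y ∈ s, x ≤ y → edist (f x) (f y) ≤ edist (g x) (g y)) :
    eVariationOn f s ≤ eVariationOn g s := by
  refine iSup_le fun ⟨n, u, hu, us⟩ => ?_
  calc ∑ i ∈ Finset.range n, edist (f (u (i + 1))) (f (u i))
      ≤ ∑ i ∈ Finset.range n, edist (g (u (i + 1))) (g (u i)) :=
        Finset.sum_le_sum fun i _ => by
          rw [edist_comm, edist_comm (g _)]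
          exact h _ (us i) _ (us (i + 1)) (hu i.le_succ)
    _ ≤ eVariationOn g s := eVariationOn.sum_le hu us

theorem eVariationOn_Icc_le_of_norm_sub_le [SeminormedAddCommGroup E] {g : α → E} {φ : α → ℝ}
    {a b : α} (hab : a ≤ b)
    (h : ∀ s ∈ Icc a b, ∀ t ∈ Icc a b, s ≤ t → ‖g t - g s‖ ≤ φ t - φ s) :
    eVariationOn g (Icc a b) ≤ ENNReal.ofReal (φ b - φ a) := by
  have hφ : MonotoneOn φ (Icc a b) := fun s hs t ht hst =>
    sub_nonneg.mp ((norm_nonneg _).trans (h s hs t ht hst))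
  calc eVariationOn g (Icc a b) ≤ eVariationOn φ (Icc a b) :=
        eVariationOn_le_of_edist_le fun s hs t ht hst => by
          rw [edist_dist, edist_dist, dist_comm, dist_comm (φ s), dist_eq_norm, Real.dist_eq,
            abs_of_nonneg (sub_nonneg.mpr (hφ hs ht hst))]
          exact ENNReal.ofReal_le_ofReal (h s hs t ht hst)
    _ = ENNReal.ofReal (φ b - φ a) := by
      rw [← hφ.eVariationOn_eq (left_mem_Icc.mpr hab) (right_mem_Icc.mpr hab), inter_self]

variable [NormedAddCommGroup E] [InnerProductSpace ℝ E]

theorem eVariationOn_Icc_le_of_inner_cone {g : α → E} {v : E} (hv : v ≠ 0) {δ : ℝ}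
    (hδ : 0 < δ) {a b : α} (hab : a ≤ b)
    (h : ∀ s ∈ Icc a b, ∀ t ∈ Icc a b, s ≤ t →
      δ * ‖g t - g s‖ * ‖v‖ ≤ inner ℝ (g t - g s) v) :
    eVariationOn g (Icc a b) ≤ ENNReal.ofReal (δ⁻¹ * ‖g b - g a‖) := by
  have hδv : 0 < δ * ‖v‖ := mul_pos hδ (norm_pos_iff.mpr hv)
  calc eVariationOn g (Icc a b)
      ≤ ENNReal.ofReal (inner ℝ (g b) v / (δ * ‖v‖) - inner ℝ (g a) v / (δ * ‖v‖)) :=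
        eVariationOn_Icc_le_of_norm_sub_le (φ := fun t => inner ℝ (g t) v / (δ * ‖v‖)) hab
          fun s hs t ht hst => by
          rw [← sub_div, ← inner_sub_left (𝕜 := ℝ), le_div_iff₀ hδv]
          linarith [h s hs t ht hst]
    _ ≤ ENNReal.ofReal (δ⁻¹ * ‖g b - g a‖) := by
      refine ENNReal.ofReal_le_ofReal ?_
      rw [← sub_div, ← inner_sub_left (𝕜 := ℝ), div_le_iff₀ hδv]
      calc inner ℝ (g b - g a) v ≤ ‖g b - g a‖ * ‖v‖ := real_inner_le_norm _ _
        _ = δ⁻¹ * ‖g b - g a‖ * (δ * ‖v‖) := by field_simp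

end Variation

theorem inner_cone_of_deltaMonotone_on_line {E : Type*} [NormedAddCommGroup E]
    [InnerProductSpace ℝ E] {F : E → E} {δ : ℝ}
    (hF : ∀ x y, δ * ‖F x - F y‖ * ‖x - y‖ ≤ (inner ℝ (F x - F y) (x - y) : ℝ))
    (x v : E) {s t : ℝ} (hst : s ≤ t) :
    δ * ‖F (x + t • v) - F (x + s • v)‖ * ‖v‖ ≤ inner ℝ (F (x + t • v) - F (x + s • v)) v := by
  rcases hst.eq_or_lt with rfl | hlt
  · simp
  have h := hF (x + t • v) (x + s • v)
  rw [add_sub_add_left_eq_sub, ← sub_smul, norm_smul, Real.norm_of_nonneg (sub_pos.mpr hlt).le,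
    real_inner_smul_right] at h
  refine le_of_mul_le_mul_left ?_ (sub_pos.mpr hlt)
  linarith

theorem stmt10_general (n : ℕ) (F : EuclideanSpace ℝ (Fin n) → EuclideanSpace ℝ (Fin n))
    (δ : ℝ) (hδ0 : 0 < δ)
    (hF : ∀ x y, δ * ‖F x - F y‖ * ‖x - y‖ ≤ (inner ℝ (F x - F y) (x - y) : ℝ))
    (a b : EuclideanSpace ℝ (Fin n)) :
    eVariationOn (fun t : ℝ => F (a + t • (b - a))) (Set.Icc 0 1) ≤
      ENNReal.ofReal (δ⁻¹ * ‖F a - F b‖) := by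
  rcases eq_or_ne b a with rfl | hab
  · simp [eVariationOn.constant_on]
  have h := eVariationOn_Icc_le_of_inner_cone (sub_ne_zero.mpr hab) hδ0 zero_le_one
    fun s _ t _ hst => inner_cone_of_deltaMonotone_on_line hF a (b - a) hst
  simpa [norm_sub_rev] using h

theorem stmt10 (n : ℕ) (F : EuclideanSpace ℝ (Fin n) → EuclideanSpace ℝ (Fin n))
    (δ : ℝ) (hδ0 : 0 < δ) (hδ1 : δ ≤ 1)
    (hF : ∀ x y, δ * ‖F x - F y‖ * ‖x - y‖ ≤ (inner ℝ (F x - F y) (x - y) : ℝ))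
    (a b : EuclideanSpace ℝ (Fin n)) :
    eVariationOn (fun t : ℝ => F (a + t • (b - a))) (Set.Icc 0 1) ≤
      ENNReal.ofReal (δ⁻¹ * ‖F a - F b‖) :=
  stmt10_general n F δ hδ0 hF a b
end

section
/- Let A ⊂ ℝⁿ be nonempty and ULNC with constant τ > 0: for every pair of distinct points a, b ∈ A there exists c on the segment [a,b] with B(c, τ|a−b|) ∩ A = ∅. Set τ' = τ/(2+2τ). Then for every pair of distinct points a, b ∈ ℝⁿ (not necessarily in A), there exists c ∈ [a,b] such that the closed ball B(c, τ'|a−b|) is disjoint from A. -/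
open Metric

theorem stmt11 (n : ℕ) (A : Set (EuclideanSpace ℝ (Fin n))) (hA : A.Nonempty)
    (τ : ℝ) (hτ : 0 < τ)
    (hULNC : ∀ a ∈ A, ∀ b ∈ A, a ≠ b →
      ∃ c ∈ segment ℝ a b, closedBall c (τ * ‖a - b‖) ∩ A = ∅)
    (a b : EuclideanSpace ℝ (Fin n)) (hab : a ≠ b) :
    ∃ c ∈ segment ℝ a b, closedBall c ((τ / (2 + 2 * τ)) * ‖a - b‖) ∩ A = ∅ := by
  set d := ‖a - b‖ with hd
  have hd0 : 0 < d := by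
    rw [hd]
    exact norm_sub_pos_iff.mpr hab
  have h2τ : (0:ℝ) < 2 + 2 * τ := by linarith
  set r := (τ / (2 + 2 * τ)) * d with hr
  have hr0 : 0 < r := by positivity
  by_cases ha : closedBall a r ∩ A = ∅
  · exact ⟨a, left_mem_segment ℝ a b, ha⟩
  by_cases hb : closedBall b r ∩ A = ∅
  · exact ⟨b, right_mem_segment ℝ a b, hb⟩
  obtain ⟨a', ha'⟩ := Set.nonempty_iff_ne_empty.mpr ha
  obtain ⟨b', hb'⟩ := Set.nonempty_iff_ne_empty.mpr hb
  have ha'r : ‖a' - a‖ ≤ r := by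
    have := ha'.1
    rwa [mem_closedBall, dist_eq_norm] at this
  have hb'r : ‖b' - b‖ ≤ r := by
    have := hb'.1
    rwa [mem_closedBall, dist_eq_norm] at this
  have key : τ * (d - 2 * r) = 2 * r := by
    rw [hr]
    field_simp
    ring
  have hd2r : 0 < d - 2 * r := by nlinarith
  have hlow : d - 2 * r ≤ ‖a' - b'‖ := by
    have h1 : ‖a - b‖ ≤ ‖a - a'‖ + ‖a' - b‖ := norm_sub_le_norm_sub_add_norm_sub a a' b
    have h2 : ‖a' - b‖ ≤ ‖a' - b'‖ + ‖b' - b‖ := norm_sub_le_norm_sub_add_norm_sub a' b' b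
    have h3 : ‖a - a'‖ = ‖a' - a‖ := norm_sub_rev a a'
    rw [← hd] at h1
    linarith
  have hne : a' ≠ b' := by
    intro h
    rw [h, sub_self, norm_zero] at hlow
    linarith
  obtain ⟨c', hc'seg, hc'empty⟩ := hULNC a' ha'.2 b' hb'.2 hne
  obtain ⟨u, v, hu, hv, huv, hc'⟩ := hc'seg
  refine ⟨u • a + v • b, ⟨u, v, hu, hv, huv, rfl⟩, ?_⟩
  have hcc' : ‖(u • a + v • b) - c'‖ ≤ r := by
    have heq : (u • a + v • b) - c' = u • (a - a') + v • (b - b') := by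
      rw [← hc']
      module
    rw [heq]
    calc ‖u • (a - a') + v • (b - b')‖ ≤ ‖u • (a - a')‖ + ‖v • (b - b')‖ :=
          norm_add_le _ _
      _ = u * ‖a - a'‖ + v * ‖b - b'‖ := by
          rw [norm_smul, norm_smul, Real.norm_of_nonneg hu, Real.norm_of_nonneg hv]
      _ ≤ u * r + v * r := by
          have h3 : ‖a - a'‖ = ‖a' - a‖ := norm_sub_rev a a'
          have h4 : ‖b - b'‖ = ‖b' - b‖ := norm_sub_rev b b'
          rw [h3, h4]
          gcongr
      _ = r := by rw [← add_mul, huv, one_mul]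
  rw [Set.eq_empty_iff_forall_notMem] at hc'empty ⊢
  rintro x ⟨hx1, hx2⟩
  refine hc'empty x ⟨?_, hx2⟩
  rw [mem_closedBall, dist_eq_norm]
  rw [mem_closedBall, dist_eq_norm] at hx1
  have htri : ‖x - c'‖ ≤ ‖x - (u • a + v • b)‖ + ‖(u • a + v • b) - c'‖ :=
    norm_sub_le_norm_sub_add_norm_sub _ _ _
  have h2r : 2 * r ≤ τ * ‖a' - b'‖ := by nlinarith
  linarith
end

section
/- Let A ⊂ ℝⁿ be nonempty with the property that there is τ' > 0 such that for all distinct a, b ∈ ℝⁿ there exists c ∈ [a,b] with dist(c, A) ≥ τ'|a−b|. Then for every p > 0 there is a constant c₀ > 0 depending only on τ' and p such that for all x₀ ∈ ℝⁿ and v ≠ 0, (∫₀¹ dist(x₀ + tv, A)^p dt)^{1/p} ≥ c₀ |v|. -/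
open Metric

theorem stmt12 (τ' p : ℝ) (hτ' : 0 < τ') (hp : 0 < p) :
    ∃ c₀ > 0, ∀ (n : ℕ) (A : Set (EuclideanSpace ℝ (Fin n))), A.Nonempty →
      (∀ a b : EuclideanSpace ℝ (Fin n), a ≠ b →
        ∃ c ∈ segment ℝ a b, τ' * ‖a - b‖ ≤ infDist c A) →
      ∀ (x₀ v : EuclideanSpace ℝ (Fin n)), v ≠ 0 →
        c₀ * ‖v‖ ≤ (∫ t in (0:ℝ)..1, infDist (x₀ + t • v) A ^ p) ^ (1 / p) := by
  set δ : ℝ := min (τ' / 2) (4⁻¹) with hδdef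
  have hδ0 : 0 < δ := lt_min (by linarith) (by norm_num)
  have hδ4 : δ ≤ 4⁻¹ := min_le_right _ _
  have hδτ : 2 * δ ≤ τ' := by
    have := min_le_left (τ' / 2) (4⁻¹)
    linarith
  refine ⟨δ ^ (1 / p) * δ, by positivity, ?_⟩
  intro n A hA hseg x₀ v hv
  obtain ⟨c, hc, hcd⟩ := hseg x₀ (x₀ + v) (by simpa using hv)
  rw [segment_eq_image'] at hc
  obtain ⟨s, hs, rfl⟩ := hc
  have hnorm : ‖x₀ - (x₀ + v)‖ = ‖v‖ := by
    simp [sub_add_eq_sub_sub]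
  rw [hnorm, add_sub_cancel_left] at hcd
  have hcd : τ' * ‖v‖ ≤ infDist (x₀ + s • v) A := hcd
  -- choose the subinterval
  set u : ℝ := if s ≤ 1 / 2 then s else s - δ with hu
  have hu0 : 0 ≤ u := by
    rcases le_or_gt s (1 / 2) with h | h
    · rw [hu, if_pos h]; exact hs.1
    · rw [hu, if_neg (not_le.mpr h)]
      have : (4:ℝ)⁻¹ ≤ 1 / 2 := by norm_num
      linarith
  have hu1 : u + δ ≤ 1 := by
    rcases le_or_gt s (1 / 2) with h | h
    · rw [hu, if_pos h]
      have : (4:ℝ)⁻¹ ≤ 1 / 2 := by norm_num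
      linarith
    · rw [hu, if_neg (not_le.mpr h)]
      linarith [hs.2]
  have hmem : ∀ t ∈ Set.Icc u (u + δ), |t - s| ≤ δ := by
    intro t ht
    rcases le_or_gt s (1 / 2) with h | h
    · rw [hu, if_pos h] at ht
      rw [abs_le]; constructor <;> [linarith [ht.1]; linarith [ht.2]]
    · rw [hu, if_neg (not_le.mpr h)] at ht
      rw [abs_le]; constructor <;> [linarith [ht.1]; linarith [ht.2]]
  -- pointwise bound on the subinterval
  have hpt : ∀ t ∈ Set.Icc u (u + δ), δ * ‖v‖ ≤ infDist (x₀ + t • v) A := by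
    intro t ht
    have h1 : infDist (x₀ + s • v) A ≤ infDist (x₀ + t • v) A
        + dist (x₀ + s • v) (x₀ + t • v) :=
      infDist_le_infDist_add_dist
    have hdist : dist (x₀ + s • v) (x₀ + t • v) = |s - t| * ‖v‖ := by
      rw [dist_add_left, dist_eq_norm, ← sub_smul, norm_smul, Real.norm_eq_abs]
    have habs : |s - t| ≤ δ := by rw [abs_sub_comm]; exact hmem t ht
    have hnv : 0 ≤ ‖v‖ := norm_nonneg v
    have h2 : |s - t| * ‖v‖ ≤ δ * ‖v‖ := mul_le_mul_of_nonneg_right habs hnv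
    have h3 : 2 * δ * ‖v‖ ≤ τ' * ‖v‖ := mul_le_mul_of_nonneg_right hδτ hnv
    rw [hdist] at h1
    nlinarith [hcd]
  -- continuity / integrability
  have hcont : Continuous fun t : ℝ => infDist (x₀ + t • v) A ^ p := by
    have h1 : Continuous fun t : ℝ => infDist (x₀ + t • v) A :=
      (continuous_infDist_pt A).comp
        (continuous_const.add (continuous_id.smul continuous_const))
    have h2 : Continuous fun x : ℝ => x ^ p :=
      continuous_iff_continuousAt.mpr fun x =>
        Real.continuousAt_rpow_const x p (Or.inr hp.le)
    exact h2.comp h1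
  have hint : IntervalIntegrable (fun t : ℝ => infDist (x₀ + t • v) A ^ p)
      MeasureTheory.volume 0 1 := hcont.intervalIntegrable 0 1
  have hintI : IntervalIntegrable (fun t : ℝ => infDist (x₀ + t • v) A ^ p)
      MeasureTheory.volume u (u + δ) := hcont.intervalIntegrable _ _
  have hle : u ≤ u + δ := by linarith
  have h1 : ∫ t in u..(u + δ), (δ * ‖v‖) ^ p
      ≤ ∫ t in u..(u + δ), infDist (x₀ + t • v) A ^ p := by
    refine intervalIntegral.integral_mono_on hle intervalIntegrable_const hintI ?_
    intro t ht
    exact Real.rpow_le_rpow (by positivity) (hpt t ht) hp.le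
  have h2 : ∫ t in u..(u + δ), infDist (x₀ + t • v) A ^ p
      ≤ ∫ t in (0:ℝ)..1, infDist (x₀ + t • v) A ^ p := by
    refine intervalIntegral.integral_mono_interval hu0 hle hu1 ?_ hint
    exact MeasureTheory.ae_of_all _ fun t => by
      simp only [Pi.zero_apply]; exact Real.rpow_nonneg infDist_nonneg p
  have hconst : ∫ t in u..(u + δ), (δ * ‖v‖) ^ p = δ * (δ * ‖v‖) ^ p := by
    rw [intervalIntegral.integral_const, smul_eq_mul, add_sub_cancel_left]
  have hkey : δ * (δ * ‖v‖) ^ p ≤ ∫ t in (0:ℝ)..1, infDist (x₀ + t • v) A ^ p := by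
    rw [← hconst]; exact h1.trans h2
  have hfin : (δ * (δ * ‖v‖) ^ p) ^ (1 / p)
      ≤ (∫ t in (0:ℝ)..1, infDist (x₀ + t • v) A ^ p) ^ (1 / p) :=
    Real.rpow_le_rpow (by positivity) hkey (by positivity)
  calc δ ^ (1 / p) * δ * ‖v‖ = δ ^ (1 / p) * (δ * ‖v‖) := by ring
    _ = (δ * (δ * ‖v‖) ^ p) ^ (1 / p) := by
        rw [Real.mul_rpow hδ0.le (by positivity), one_div,
          Real.rpow_rpow_inv (by positivity) hp.ne']
    _ ≤ _ := hfin
end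

section
/- Let v ∈ ℝⁿ \ {0}, q > 1, ε ∈ (0,1), and for 1 ≤ i < j ≤ n with v_j ≠ 0 define A_{ij} = {k ∈ ℤ : ε/(n−1) ≤ q^{ik}|v_i|/(q^{jk}|v_j|) ≤ (n−1)/ε} (and A_{ij} = ∅ if v_j = 0). Then {k ∈ ℤ : |Σᵢ q^{ik}vᵢ| < ((1−ε)/(1+ε))Σᵢ q^{ik}|vᵢ|} ⊆ ⋃_{1≤i<j≤n} A_{ij}. -/
lemma stmt15_aux (x y c ε : ℝ) (hy : 0 < y) (hc : 0 < c) (hε : 0 < ε)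
    (h1 : ε * y ≤ c * x) (h2 : ε * x ≤ c * y) : ε / c ≤ x / y ∧ x / y ≤ c / ε := by
  constructor
  · rw [div_le_div_iff₀ hc hy]; nlinarith
  · rw [div_le_div_iff₀ hy hε]; nlinarith

theorem stmt15 (n : ℕ) (hn : 2 ≤ n) (v : Fin n → ℝ) (hv : v ≠ 0)
    (q ε : ℝ) (hq : 1 < q) (hε0 : 0 < ε) (hε1 : ε < 1) :
    {k : ℤ |
      |∑ i : Fin n, q ^ (((i : ℕ) + 1 : ℤ) * k) * v i| <
        (1 - ε) / (1 + ε) * ∑ i : Fin n, q ^ (((i : ℕ) + 1 : ℤ) * k) * |v i|} ⊆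
      ⋃ (i : Fin n) (j : Fin n) (_ : i < j),
        {k : ℤ | v j ≠ 0 ∧
          ε / (n - 1) ≤ q ^ (((i : ℕ) + 1 : ℤ) * k) * |v i| /
            (q ^ (((j : ℕ) + 1 : ℤ) * k) * |v j|) ∧
          q ^ (((i : ℕ) + 1 : ℤ) * k) * |v i| /
            (q ^ (((j : ℕ) + 1 : ℤ) * k) * |v j|) ≤ (n - 1) / ε} := by
  classical
  intro k hk
  simp only [Set.mem_setOf_eq] at hk
  have hq0 : (0:ℝ) < q := lt_trans one_pos hq
  set w : Fin n → ℝ := fun i => q ^ (((i : ℕ) + 1 : ℤ) * k) * v i with hwdef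
  have hapos : ∀ i : Fin n, (0:ℝ) < q ^ (((i : ℕ) + 1 : ℤ) * k) := fun i => zpow_pos hq0 _
  have habs : ∀ i : Fin n, q ^ (((i : ℕ) + 1 : ℤ) * k) * |v i| = |w i| := by
    intro i
    rw [hwdef, abs_mul, abs_of_pos (hapos i)]
  have hk' : |∑ i : Fin n, w i| < (1 - ε) / (1 + ε) * ∑ i : Fin n, |w i| := by
    have h1 : ∑ i : Fin n, |w i| = ∑ i : Fin n, q ^ (((i : ℕ) + 1 : ℤ) * k) * |v i| :=
      Finset.sum_congr rfl fun i _ => (habs i).symm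
    rw [h1]; exact hk
  set Sp := Finset.univ.filter (fun i : Fin n => 0 ≤ w i) with hSpdef
  set Sn := Finset.univ.filter (fun i : Fin n => ¬ 0 ≤ w i) with hSndef
  set P := ∑ i ∈ Sp, w i with hPdef
  set N := ∑ i ∈ Sn, (-w i) with hNdef
  have hsum : ∑ i : Fin n, w i = P - N := by
    rw [hPdef, hNdef, ← Finset.sum_filter_add_sum_filter_not Finset.univ
      (fun i : Fin n => 0 ≤ w i) w, Finset.sum_neg_distrib]
    ring
  have hsumabs : ∑ i : Fin n, |w i| = P + N := by
    rw [hPdef, hNdef, ← Finset.sum_filter_add_sum_filter_not Finset.univ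
      (fun i : Fin n => 0 ≤ w i) (fun i => |w i|)]
    congr 1
    · exact Finset.sum_congr rfl fun i hi =>
        abs_of_nonneg (Finset.mem_filter.mp hi).2
    · exact Finset.sum_congr rfl fun i hi =>
        abs_of_neg (lt_of_not_ge (Finset.mem_filter.mp hi).2)
  have hP0 : 0 ≤ P := Finset.sum_nonneg fun i hi => (Finset.mem_filter.mp hi).2
  have hN0 : 0 ≤ N := Finset.sum_nonneg fun i hi =>
    (neg_nonneg.mpr (le_of_lt (lt_of_not_ge (Finset.mem_filter.mp hi).2)))
  -- total positivity
  have hStot : 0 < P + N := by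
    obtain ⟨i0, hi0⟩ := Function.ne_iff.mp hv
    have : 0 < |w i0| := by
      rw [hwdef]
      simp only [abs_mul, abs_of_pos (hapos i0)]
      exact mul_pos (hapos i0) (abs_pos.mpr hi0)
    calc (0:ℝ) < |w i0| := this
      _ ≤ ∑ i : Fin n, |w i| :=
        Finset.single_le_sum (fun i _ => abs_nonneg (w i)) (Finset.mem_univ i0)
      _ = P + N := hsumabs
  have hε' : (0:ℝ) < 1 + ε := by linarith
  have hkabs : |P - N| < (1 - ε) / (1 + ε) * (P + N) := by
    rw [← hsum, ← hsumabs]; exact hk'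
  have h2 : (1 + ε) * |P - N| < (1 - ε) * (P + N) := by
    calc (1 + ε) * |P - N| < (1 + ε) * ((1 - ε) / (1 + ε) * (P + N)) :=
          mul_lt_mul_of_pos_left hkabs hε'
      _ = (1 - ε) * (P + N) := by field_simp
  have hεPN : ε * P < N := by
    nlinarith [mul_le_mul_of_nonneg_left (le_abs_self (P - N)) (le_of_lt hε')]
  have hεNP : ε * N < P := by
    nlinarith [mul_le_mul_of_nonneg_left (neg_abs_le (P - N)) (le_of_lt hε')]
  have hNpos : 0 < N := by nlinarith [mul_nonneg hε0.le hP0]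
  have hPpos : 0 < P := by nlinarith [mul_pos hε0 hNpos]
  -- nonemptiness
  have hSn_ne : Sn.Nonempty := by
    rcases Sn.eq_empty_or_nonempty with h | h
    · exfalso; rw [hNdef, h, Finset.sum_empty] at hNpos; exact lt_irrefl _ hNpos
    · exact h
  have hSp_ne : Sp.Nonempty := by
    rcases Sp.eq_empty_or_nonempty with h | h
    · exfalso; rw [hPdef, h, Finset.sum_empty] at hPpos; exact lt_irrefl _ hPpos
    · exact h
  -- max elements
  obtain ⟨i₀, hi₀S, hi₀max⟩ := Finset.exists_max_image Sn (fun i => -w i) hSn_ne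
  obtain ⟨j₀, hj₀S, hj₀max⟩ := Finset.exists_max_image Sp w hSp_ne
  set x := -w i₀ with hxdef
  set y := w j₀ with hydef
  have hwi₀ : w i₀ < 0 := lt_of_not_ge (Finset.mem_filter.mp hi₀S).2
  have hx0 : 0 < x := by rw [hxdef]; linarith
  have hy0 : 0 < y := by
    -- there is a strictly positive element of Sp
    by_contra h
    push_neg at h
    have : P = 0 := by
      rw [hPdef]
      apply Finset.sum_eq_zero
      intro i hi
      have h1 : 0 ≤ w i := (Finset.mem_filter.mp hi).2
      have h2' : w i ≤ y := hj₀max i hi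
      linarith
    linarith
  have hxN : x ≤ N := by
    rw [hNdef, hxdef]
    exact Finset.single_le_sum (fun i hi =>
      (neg_nonneg.mpr (le_of_lt (lt_of_not_ge (Finset.mem_filter.mp hi).2)))) hi₀S
  have hyP : y ≤ P := by
    rw [hPdef, hydef]
    exact Finset.single_le_sum (fun i hi => (Finset.mem_filter.mp hi).2) hj₀S
  -- cardinality bound
  have hcard : Sp.card + Sn.card = n := by
    rw [hSpdef, hSndef, Finset.card_filter_add_card_filter_not,
      Finset.card_univ, Fintype.card_fin]
  have hSnn : Sn.card + 1 ≤ n := by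
    have := Finset.card_pos.mpr hSp_ne
    omega
  have hSpn : Sp.card + 1 ≤ n := by
    have := Finset.card_pos.mpr hSn_ne
    omega
  set c : ℝ := (n : ℝ) - 1 with hcdef
  have hc0 : (0:ℝ) < c := by
    rw [hcdef]
    have : (2:ℝ) ≤ n := by exact_mod_cast hn
    linarith
  have hcSn : (Sn.card : ℝ) ≤ c := by
    rw [hcdef]
    have : (Sn.card : ℝ) + 1 ≤ n := by exact_mod_cast hSnn
    linarith
  have hcSp : (Sp.card : ℝ) ≤ c := by
    rw [hcdef]
    have : (Sp.card : ℝ) + 1 ≤ n := by exact_mod_cast hSpn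
    linarith
  have hNcx : N ≤ c * x := by
    have h1 : N ≤ Sn.card • x := Finset.sum_le_card_nsmul Sn _ x (fun i hi => hi₀max i hi)
    rw [nsmul_eq_mul] at h1
    calc N ≤ (Sn.card : ℝ) * x := h1
      _ ≤ c * x := mul_le_mul_of_nonneg_right hcSn hx0.le
  have hPcy : P ≤ c * y := by
    have h1 : P ≤ Sp.card • y := Finset.sum_le_card_nsmul Sp _ y (fun i hi => hj₀max i hi)
    rw [nsmul_eq_mul] at h1
    calc P ≤ (Sp.card : ℝ) * y := h1
      _ ≤ c * y := mul_le_mul_of_nonneg_right hcSp hy0.le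
  have key1 : ε * y ≤ c * x := by
    calc ε * y ≤ ε * P := mul_le_mul_of_nonneg_left hyP hε0.le
      _ ≤ N := hεPN.le
      _ ≤ c * x := hNcx
  have key2 : ε * x ≤ c * y := by
    calc ε * x ≤ ε * N := mul_le_mul_of_nonneg_left hxN hε0.le
      _ ≤ P := hεNP.le
      _ ≤ c * y := hPcy
  have habsx : q ^ (((i₀ : ℕ) + 1 : ℤ) * k) * |v i₀| = x := by
    rw [habs i₀, hxdef, abs_of_neg hwi₀]
  have habsy : q ^ (((j₀ : ℕ) + 1 : ℤ) * k) * |v j₀| = y := by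
    rw [habs j₀, hydef, abs_of_pos hy0]
  have hvi₀ : v i₀ ≠ 0 := by
    intro h
    rw [hwdef] at hwi₀
    simp only [h, mul_zero] at hwi₀
    exact lt_irrefl _ hwi₀
  have hvj₀ : v j₀ ≠ 0 := by
    intro h
    rw [hydef, hwdef] at hy0
    simp only [h, mul_zero] at hy0
    exact lt_irrefl _ hy0
  have hne : i₀ ≠ j₀ := by
    intro h
    rw [h] at hwi₀
    exact absurd hwi₀ (not_lt.mpr hy0.le)
  simp only [Set.mem_iUnion, Set.mem_setOf_eq]
  rcases hne.lt_or_gt with hlt | hlt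
  · refine ⟨i₀, j₀, hlt, hvj₀, ?_, ?_⟩
    · rw [habsx, habsy]; exact (stmt15_aux x y c ε hy0 hc0 hε0 key1 key2).1
    · rw [habsx, habsy]; exact (stmt15_aux x y c ε hy0 hc0 hε0 key1 key2).2
  · refine ⟨j₀, i₀, hlt, hvi₀, ?_, ?_⟩
    · rw [habsx, habsy]; exact (stmt15_aux y x c ε hx0 hc0 hε0 key2 key1).1
    · rw [habsx, habsy]; exact (stmt15_aux y x c ε hx0 hc0 hε0 key2 key1).2
end

section
/- Let L_k = 4^{n(k²+k)} and λ_k(x) = 1 + (1/2)cos(⟨x, w^k⟩) with |w^k| ≤ 2·4^{n(k²+k)}, so each λ_k : ℝⁿ → [1/2, 3/2] is Lipschitz with constant L_k. Then for Λ_m = ∏_{k=1}^m λ_k and any x, x' ∈ ℝⁿ with 3L_m|x−x'| < 1, one has 1 − 3L_m|x−x'| ≤ Λ_m(x')/Λ_m(x) ≤ (1 − 3L_m|x−x'|)^{−1}. -/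
/-!
Each factor moves by at most `L_k ‖x - x'‖` and stays above `1/2`, so its relative change is at
least `1 - 2 L_k ‖x - x'‖`. Multiplying these (Weierstrass' product inequality) bounds
`Λ_m(x') / Λ_m(x)` below by `1 - 2 ‖x - x'‖ ∑ L_k`, and the super-geometric growth of `L_k` gives
`∑_{k ≤ m} L_k ≤ (3/2) L_m`. Exchanging `x` and `x'` gives the upper bound.
-/

open Finset Real
open scoped RealInnerProductSpace

theorem one_sub_sum_mul_prod_le_prod {ι : Type*} (s : Finset ι) {a b ε : ι → ℝ}
    (ha : ∀ i ∈ s, 0 ≤ a i) (hb : ∀ i ∈ s, 0 ≤ b i) (hε : ∀ i ∈ s, 0 ≤ ε i)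
    (hab : ∀ i ∈ s, (1 - ε i) * a i ≤ b i) :
    (1 - ∑ i ∈ s, ε i) * ∏ i ∈ s, a i ≤ ∏ i ∈ s, b i := by
  classical
  induction s using Finset.induction_on with
  | empty => simp
  | insert j s hj ih =>
    simp only [forall_mem_insert] at ha hb hε hab
    obtain ⟨haj, ha⟩ := ha
    obtain ⟨hbj, hb⟩ := hb
    obtain ⟨hεj, hε⟩ := hε
    obtain ⟨habj, hab⟩ := hab
    rw [sum_insert hj, prod_insert hj, prod_insert hj]
    have hP : 0 ≤ ∏ i ∈ s, a i := prod_nonneg ha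
    have hS : 0 ≤ ∑ i ∈ s, ε i := sum_nonneg hε
    by_cases hc : 1 - (ε j + ∑ i ∈ s, ε i) ≤ 0
    · calc (1 - (ε j + ∑ i ∈ s, ε i)) * (a j * ∏ i ∈ s, a i) ≤ 0 :=
            mul_nonpos_of_nonpos_of_nonneg hc (mul_nonneg haj hP)
        _ ≤ b j * ∏ i ∈ s, b i := mul_nonneg hbj (prod_nonneg hb)
    · calc (1 - (ε j + ∑ i ∈ s, ε i)) * (a j * ∏ i ∈ s, a i)
          ≤ ((1 - ε j) * a j) * ((1 - ∑ i ∈ s, ε i) * ∏ i ∈ s, a i) := by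
            nlinarith [mul_nonneg (mul_nonneg hεj hS) (mul_nonneg haj hP)]
        _ ≤ b j * ∏ i ∈ s, b i :=
            mul_le_mul habj (ih ha hb hε hab) (mul_nonneg (by linarith) hP) hbj

theorem sum_Icc_one_le_of_three_mul_le {a : ℕ → ℝ} (h₀ : 0 ≤ a 0)
    (hgrow : ∀ k, 3 * a k ≤ a (k + 1)) (m : ℕ) :
    ∑ k ∈ Icc 1 m, a k ≤ 3 / 2 * a m := by
  induction m with
  | zero => simpa using h₀
  | succ m ih =>
    rw [sum_Icc_succ_top (by omega)]
    linarith [hgrow m]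

theorem three_mul_four_pow_le {n : ℕ} (hn : 1 ≤ n) (k : ℕ) :
    3 * (4 : ℝ) ^ (n * (k ^ 2 + k)) ≤ 4 ^ (n * ((k + 1) ^ 2 + (k + 1))) :=
  calc 3 * (4 : ℝ) ^ (n * (k ^ 2 + k)) ≤ 4 ^ (n * (k ^ 2 + k) + 1) := by
        rw [pow_succ (4 : ℝ)]; linarith [pow_nonneg (by norm_num : (0 : ℝ) ≤ 4) (n * (k ^ 2 + k))]
    _ ≤ 4 ^ (n * ((k + 1) ^ 2 + (k + 1))) := pow_le_pow_right₀ (by norm_num) (by nlinarith)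

theorem one_add_half_mul_cos_pos (t : ℝ) : 0 < 1 + 1 / 2 * cos t := by
  linarith [neg_one_le_cos t]

section InnerProductSpace

variable {E : Type*} [NormedAddCommGroup E] [InnerProductSpace ℝ E]

theorem one_sub_mul_one_add_half_cos_inner_le {w : E} {L : ℝ} (hw : ‖w‖ ≤ 2 * L) (y y' : E) :
    (1 - 2 * L * ‖y - y'‖) * (1 + 1 / 2 * cos ⟪y, w⟫) ≤ 1 + 1 / 2 * cos ⟪y', w⟫ := by
  have hcos : |cos ⟪y, w⟫ - cos ⟪y', w⟫| ≤ ‖y - y'‖ * ‖w‖ :=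
    calc |cos ⟪y, w⟫ - cos ⟪y', w⟫| ≤ |⟪y, w⟫ - ⟪y', w⟫| := abs_cos_sub_cos_le _ _
      _ = |⟪y - y', w⟫| := by rw [inner_sub_left]
      _ ≤ ‖y - y'‖ * ‖w‖ := abs_real_inner_le_norm _ _
  have hd := norm_nonneg (y - y')
  have hLd : ‖y - y'‖ * ‖w‖ ≤ 2 * (L * ‖y - y'‖) := by nlinarith
  have hLd₀ : 0 ≤ L * ‖y - y'‖ := mul_nonneg (by linarith [norm_nonneg w]) hd
  -- the factor stays above `1/2`, so a loss of `L ‖y - y'‖` is a relative loss of at most twice that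
  nlinarith [(abs_le.mp hcos).2, neg_one_le_cos ⟪y, w⟫]

theorem one_sub_mul_prod_le_prod {n : ℕ} (hn : 1 ≤ n) (m : ℕ) {w : ℕ → E}
    (hw : ∀ k, ‖w k‖ ≤ 2 * 4 ^ (n * (k ^ 2 + k))) (y y' : E) :
    (1 - 3 * (4 : ℝ) ^ (n * (m ^ 2 + m)) * ‖y - y'‖) *
        ∏ k ∈ Icc 1 m, (1 + 1 / 2 * cos ⟪y, w k⟫) ≤
      ∏ k ∈ Icc 1 m, (1 + 1 / 2 * cos ⟪y', w k⟫) := by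
  have hsum : ∑ k ∈ Icc 1 m, 2 * (4 : ℝ) ^ (n * (k ^ 2 + k)) * ‖y - y'‖ ≤
      3 * (4 : ℝ) ^ (n * (m ^ 2 + m)) * ‖y - y'‖ := by
    rw [← sum_mul, ← mul_sum]
    have := sum_Icc_one_le_of_three_mul_le (by positivity) (three_mul_four_pow_le hn) m
    exact mul_le_mul_of_nonneg_right (by linarith) (norm_nonneg _)
  calc (1 - 3 * (4 : ℝ) ^ (n * (m ^ 2 + m)) * ‖y - y'‖) *
        ∏ k ∈ Icc 1 m, (1 + 1 / 2 * cos ⟪y, w k⟫)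
      ≤ (1 - ∑ k ∈ Icc 1 m, 2 * (4 : ℝ) ^ (n * (k ^ 2 + k)) * ‖y - y'‖) *
        ∏ k ∈ Icc 1 m, (1 + 1 / 2 * cos ⟪y, w k⟫) :=
        mul_le_mul_of_nonneg_right (by linarith)
          (prod_nonneg fun k _ => (one_add_half_mul_cos_pos _).le)
    _ ≤ ∏ k ∈ Icc 1 m, (1 + 1 / 2 * cos ⟪y', w k⟫) :=
        one_sub_sum_mul_prod_le_prod _ (fun k _ => (one_add_half_mul_cos_pos _).le)
          (fun k _ => (one_add_half_mul_cos_pos _).le) (fun k _ => by positivity)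
          (fun k _ => one_sub_mul_one_add_half_cos_inner_le (hw k) y y')

end InnerProductSpace

theorem le_div_and_div_le_inv_of_mul_le {a b c : ℝ} (ha : 0 < a) (hc : 0 < c)
    (hab : c * a ≤ b) (hba : c * b ≤ a) : c ≤ b / a ∧ b / a ≤ c⁻¹ := by
  refine ⟨(le_div_iff₀ ha).2 hab, ?_⟩
  rw [div_le_iff₀ ha, inv_mul_eq_div, le_div_iff₀ hc]
  linarith

theorem stmt17_general (n m : ℕ) (hn : 1 ≤ n)
    (w : ℕ → EuclideanSpace ℝ (Fin n))
    (hw : ∀ k, ‖w k‖ ≤ 2 * 4 ^ (n * (k ^ 2 + k)))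
    (x x' : EuclideanSpace ℝ (Fin n))
    (h : 3 * (4 : ℝ) ^ (n * (m ^ 2 + m)) * ‖x - x'‖ < 1) :
    1 - 3 * (4 : ℝ) ^ (n * (m ^ 2 + m)) * ‖x - x'‖ ≤
      (∏ k ∈ Finset.Icc 1 m, (1 + (1 / 2) * Real.cos (inner ℝ x' (w k) : ℝ))) /
        (∏ k ∈ Finset.Icc 1 m, (1 + (1 / 2) * Real.cos (inner ℝ x (w k) : ℝ))) ∧
    (∏ k ∈ Finset.Icc 1 m, (1 + (1 / 2) * Real.cos (inner ℝ x' (w k) : ℝ))) /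
        (∏ k ∈ Finset.Icc 1 m, (1 + (1 / 2) * Real.cos (inner ℝ x (w k) : ℝ))) ≤
      (1 - 3 * (4 : ℝ) ^ (n * (m ^ 2 + m)) * ‖x - x'‖)⁻¹ := by
  refine le_div_and_div_le_inv_of_mul_le
    (prod_pos fun k _ => one_add_half_mul_cos_pos _) (by linarith)
    (one_sub_mul_prod_le_prod hn m hw x x') ?_
  simpa only [norm_sub_rev] using one_sub_mul_prod_le_prod hn m hw x' x

theorem stmt17 (n m : ℕ) (hn : 1 ≤ n) (hm : 1 ≤ m)
    (w : ℕ → EuclideanSpace ℝ (Fin n))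
    (hw : ∀ k, ‖w k‖ ≤ 2 * 4 ^ (n * (k ^ 2 + k)))
    (x x' : EuclideanSpace ℝ (Fin n))
    (h : 3 * (4 : ℝ) ^ (n * (m ^ 2 + m)) * ‖x - x'‖ < 1) :
    1 - 3 * (4 : ℝ) ^ (n * (m ^ 2 + m)) * ‖x - x'‖ ≤
      (∏ k ∈ Finset.Icc 1 m, (1 + (1 / 2) * Real.cos (inner ℝ x' (w k) : ℝ))) /
        (∏ k ∈ Finset.Icc 1 m, (1 + (1 / 2) * Real.cos (inner ℝ x (w k) : ℝ))) ∧
    (∏ k ∈ Finset.Icc 1 m, (1 + (1 / 2) * Real.cos (inner ℝ x' (w k) : ℝ))) /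
        (∏ k ∈ Finset.Icc 1 m, (1 + (1 / 2) * Real.cos (inner ℝ x (w k) : ℝ))) ≤
      (1 - 3 * (4 : ℝ) ^ (n * (m ^ 2 + m)) * ‖x - x'‖)⁻¹ :=
  stmt17_general n m hn w hw x x' h
end

section
/- Let w^k = 4^{nk²}(4^k, 4^{2k}, …, 4^{nk}) ∈ ℝⁿ. For any v ∈ ℝⁿ and integers k > l ≥ 1 such that |⟨v, w^k⟩| ≥ (1/4)Σᵢ 4^{nk²+ik}|vᵢ|, one has |⟨v, w^k⟩| ≥ 4^{nk}|⟨v, w^l⟩|. -/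
theorem stmt18 (n : ℕ) (hn : 2 ≤ n) (v : Fin n → ℝ) (k l : ℕ)
    (hl : 1 ≤ l) (hlk : l < k)
    (h : (1 / 4) * ∑ i : Fin n, (4 : ℝ) ^ (n * k ^ 2 + ((i : ℕ) + 1) * k) * |v i| ≤
      |∑ i : Fin n, v i * (4 : ℝ) ^ (n * k ^ 2 + ((i : ℕ) + 1) * k)|) :
    (4 : ℝ) ^ (n * k) * |∑ i : Fin n, v i * (4 : ℝ) ^ (n * l ^ 2 + ((i : ℕ) + 1) * l)| ≤
      |∑ i : Fin n, v i * (4 : ℝ) ^ (n * k ^ 2 + ((i : ℕ) + 1) * k)| := by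
  have habs : |∑ i : Fin n, v i * (4 : ℝ) ^ (n * l ^ 2 + ((i : ℕ) + 1) * l)| ≤
      ∑ i : Fin n, (4 : ℝ) ^ (n * l ^ 2 + ((i : ℕ) + 1) * l) * |v i| := by
    refine (Finset.abs_sum_le_sum_abs _ _).trans (le_of_eq ?_)
    refine Finset.sum_congr rfl fun i _ => ?_
    rw [abs_mul, abs_of_nonneg (by positivity : (0:ℝ) ≤ (4:ℝ) ^ (n * l ^ 2 + ((i : ℕ) + 1) * l)),
      mul_comm]
  have step : (4 : ℝ) ^ (n * k) * ∑ i : Fin n, (4 : ℝ) ^ (n * l ^ 2 + ((i : ℕ) + 1) * l) * |v i| ≤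
      (1 / 4) * ∑ i : Fin n, (4 : ℝ) ^ (n * k ^ 2 + ((i : ℕ) + 1) * k) * |v i| := by
    rw [Finset.mul_sum, Finset.mul_sum]
    refine Finset.sum_le_sum fun i _ => ?_
    have hexp : n * k + (n * l ^ 2 + ((i : ℕ) + 1) * l) + 1 ≤ n * k ^ 2 + ((i : ℕ) + 1) * k := by
      have h1 : l + 1 ≤ k := hlk
      have a1 : n * ((l + 1) * (l + 1)) ≤ n * (k * k) :=
        Nat.mul_le_mul_left n (Nat.mul_le_mul h1 h1)
      have a2 : ((i : ℕ) + 1) * (l + 1) ≤ ((i : ℕ) + 1) * k := Nat.mul_le_mul_left _ h1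
      have a3 : n ≤ n * l := Nat.le_mul_of_pos_right n hl
      nlinarith [a1, a2, a3]
    have hpow : (4 : ℝ) ^ (n * k + (n * l ^ 2 + ((i : ℕ) + 1) * l) + 1) ≤
        (4 : ℝ) ^ (n * k ^ 2 + ((i : ℕ) + 1) * k) :=
      pow_le_pow_right₀ (by norm_num) hexp
    have hfac : (4 : ℝ) ^ (n * k) * (4 : ℝ) ^ (n * l ^ 2 + ((i : ℕ) + 1) * l) ≤
        (1 / 4) * (4 : ℝ) ^ (n * k ^ 2 + ((i : ℕ) + 1) * k) := by
      rw [← pow_add]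
      rw [pow_succ] at hpow
      linarith
    have := mul_le_mul_of_nonneg_right hfac (abs_nonneg (v i))
    calc (4 : ℝ) ^ (n * k) * ((4 : ℝ) ^ (n * l ^ 2 + ((i : ℕ) + 1) * l) * |v i|)
        = (4 : ℝ) ^ (n * k) * (4 : ℝ) ^ (n * l ^ 2 + ((i : ℕ) + 1) * l) * |v i| := by ring
      _ ≤ (1 / 4) * (4 : ℝ) ^ (n * k ^ 2 + ((i : ℕ) + 1) * k) * |v i| := this
      _ = (1 / 4) * ((4 : ℝ) ^ (n * k ^ 2 + ((i : ℕ) + 1) * k) * |v i|) := by ring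
  calc (4 : ℝ) ^ (n * k) * |∑ i : Fin n, v i * (4 : ℝ) ^ (n * l ^ 2 + ((i : ℕ) + 1) * l)|
      ≤ (4 : ℝ) ^ (n * k) * ∑ i : Fin n, (4 : ℝ) ^ (n * l ^ 2 + ((i : ℕ) + 1) * l) * |v i| := by
        exact mul_le_mul_of_nonneg_left habs (by positivity)
    _ ≤ (1 / 4) * ∑ i : Fin n, (4 : ℝ) ^ (n * k ^ 2 + ((i : ℕ) + 1) * k) * |v i| := step
    _ ≤ _ := h
end

section
/- Let μ be a doubling measure on ℝⁿ with doubling constant C (μ(2B) ≤ Cμ(B) for all balls B). Then for any distinct x, y ∈ ℝⁿ and r > 0, choosing w with x−w ⊥ x−y and |x−w| = r/2, every z in the closed ball B(w, r/4) satisfies τ(x,y,z) := π − max{∠zxy, ∠zyx} ≥ π/3, and μ(B(x,r)) ≤ C³μ(B(w, r/4)). -/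
open MeasureTheory Metric EuclideanGeometry

/-! Seen from `x`, the ball `B(w, r/4)` whose centre lies at distance `r/2` fills a cone of
half-angle `π/6` around `w - x ⊥ y - x`, so `∠zxy ∈ [π/3, 2π/3]`; the angle sum of the triangle
`xyz` then gives `∠zyx ≤ 2π/3` as well. The measure bound is three doublings, since
`B(x, r) ⊆ B(w, 2r) = B(w, 2³ · r/4)`. -/

open Real InnerProductGeometry Set
open scoped RealInnerProductSpace

theorem measure_closedBall_two_pow_mul_le {X : Type*} [PseudoMetricSpace X] [MeasurableSpace X]
    {μ : Measure X} {K : ENNReal} {c : X}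
    (hdbl : ∀ ρ : ℝ, 0 < ρ → μ (closedBall c (2 * ρ)) ≤ K * μ (closedBall c ρ))
    {ρ : ℝ} (hρ : 0 < ρ) (k : ℕ) :
    μ (closedBall c (2 ^ k * ρ)) ≤ K ^ k * μ (closedBall c ρ) := by
  induction k with
  | zero => simp
  | succ k ih =>
    calc μ (closedBall c (2 ^ (k + 1) * ρ)) = μ (closedBall c (2 * (2 ^ k * ρ))) := by ring_nf
      _ ≤ K * μ (closedBall c (2 ^ k * ρ)) := hdbl _ (by positivity)
      _ ≤ K * (K ^ k * μ (closedBall c ρ)) := by gcongr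
      _ = K ^ (k + 1) * μ (closedBall c ρ) := by ring

section InnerProduct

variable {F : Type*} [NormedAddCommGroup F] [InnerProductSpace ℝ F]

theorem InnerProductGeometry.angle_mem_Icc_of_two_mul_abs_inner_le {a b : F}
    (h : 2 * |⟪a, b⟫| ≤ ‖a‖ * ‖b‖) : angle a b ∈ Icc (π / 3) (π - π / 3) := by
  have hcos : |⟪a, b⟫ / (‖a‖ * ‖b‖)| ≤ 1 / 2 := by
    rcases (mul_nonneg (norm_nonneg a) (norm_nonneg b)).eq_or_lt with h0 | hpos
    · rw [← h0, div_zero, abs_zero]; norm_num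
    · rw [abs_div, abs_of_pos hpos, div_le_iff₀ hpos]; linarith
  have harccos : arccos (1 / 2) = π / 3 :=
    arccos_eq_of_eq_cos (by positivity) (by linarith [pi_pos]) cos_pi_div_three.symm
  rw [angle, ← harccos, ← arccos_neg]
  exact ⟨arccos_le_arccos (abs_le.mp hcos).2, arccos_le_arccos (abs_le.mp hcos).1⟩

theorem norm_add_smul_sq_of_inner_eq_zero {a e : F} (he : ‖e‖ = 1) (h : ⟪a, e⟫ = 0) (s : ℝ) :
    ‖a + s • e‖ ^ 2 = ‖a‖ ^ 2 + s ^ 2 := by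
  rw [sq, sq, sq, norm_add_sq_eq_norm_sq_add_norm_sq_real
    (by rw [real_inner_smul_right, h, mul_zero]), norm_smul, he, mul_one, norm_eq_abs,
    abs_mul_abs_self]

/-- Write `v = q + s • e` with `q ⊥ e`; the claim reduces to `3 s² ≤ (‖u‖ - ‖q‖)²`, and since
`s² ≤ ‖u‖² / 4 - ‖q‖²` the difference is at least `(2‖q‖ - ‖u‖ / 2)²`. -/
theorem two_mul_abs_inner_add_le_of_norm_eq_one {u v e : F} (he : ‖e‖ = 1)
    (hue : ⟪u, e⟫ = 0) (hv : 2 * ‖v‖ ≤ ‖u‖) : 2 * |⟪u + v, e⟫| ≤ ‖u + v‖ := by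
  set s := ⟪v, e⟫
  set q := v - s • e with hq
  have hqe : ⟪q, e⟫ = 0 := by
    rw [inner_sub_left, real_inner_smul_left, real_inner_self_eq_norm_sq, he]; ring
  have hv_sq : ‖v‖ ^ 2 = ‖q‖ ^ 2 + s ^ 2 := by
    rw [← norm_add_smul_sq_of_inner_eq_zero he hqe, hq, sub_add_cancel]
  have huv_sq : ‖u + v‖ ^ 2 = ‖u + q‖ ^ 2 + s ^ 2 := by
    rw [← norm_add_smul_sq_of_inner_eq_zero he (by rw [inner_add_left, hue, hqe, add_zero]), hq,
      add_assoc, sub_add_cancel]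
  have huq : ‖u‖ - ‖q‖ ≤ ‖u + q‖ := by simpa using norm_sub_norm_le u (-q)
  have hqv : ‖q‖ ≤ ‖v‖ := by nlinarith [norm_nonneg q, norm_nonneg v]
  rw [inner_add_left, hue, zero_add, ← abs_two, ← abs_mul]
  refine abs_le_of_sq_le_sq ?_ (norm_nonneg _)
  nlinarith [sq_nonneg (2 * ‖q‖ - ‖u‖ / 2), norm_nonneg q]

theorem InnerProductGeometry.angle_add_mem_Icc {u v e : F} (hue : ⟪u, e⟫ = 0)
    (hv : 2 * ‖v‖ ≤ ‖u‖) : angle (u + v) e ∈ Icc (π / 3) (π - π / 3) := by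
  rcases eq_or_ne e 0 with rfl | he
  · rw [angle_zero_right]; constructor <;> linarith [pi_pos]
  rw [← angle_smul_right_of_pos _ _ (inv_pos.mpr (norm_pos_iff.mpr he))]
  refine angle_mem_Icc_of_two_mul_abs_inner_le ?_
  rw [norm_smul, norm_inv, norm_norm, inv_mul_cancel₀ (norm_ne_zero_iff.mpr he), mul_one]
  exact two_mul_abs_inner_add_le_of_norm_eq_one (norm_smul_inv_norm he)
    (by rw [real_inner_smul_right, hue, mul_zero]) hv

theorem EuclideanGeometry.angle_mem_Icc_of_two_mul_dist_le {x y w z : F}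
    (hw : ⟪x - w, x - y⟫ = 0) (hz : 2 * dist z w ≤ dist x w) :
    ∠ z x y ∈ Icc (π / 3) (π - π / 3) := by
  have h := angle_add_mem_Icc (u := w - x) (v := z - w) (e := y - x)
    (by rw [← neg_sub x w, ← neg_sub x y, inner_neg_neg, hw])
    (by rwa [← dist_eq_norm, ← dist_eq_norm, dist_comm w])
  rwa [sub_add_sub_cancel'] at h

end InnerProduct

theorem stmt19_general (n : ℕ) (μ : Measure (EuclideanSpace ℝ (Fin n)))
    (C : ℝ)
    (hdbl : ∀ (c : EuclideanSpace ℝ (Fin n)) (ρ : ℝ), 0 < ρ →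
      μ (closedBall c (2 * ρ)) ≤ ENNReal.ofReal C * μ (closedBall c ρ))
    (x y : EuclideanSpace ℝ (Fin n)) (hxy : x ≠ y) (r : ℝ) (hr : 0 < r)
    (w : EuclideanSpace ℝ (Fin n))
    (hw_orth : (inner ℝ (x - w) (x - y) : ℝ) = 0) (hw_dist : ‖x - w‖ = r / 2) :
    (∀ z ∈ closedBall w (r / 4),
      Real.pi / 3 ≤ Real.pi - max (∠ z x y) (∠ z y x)) ∧
    μ (closedBall x r) ≤ ENNReal.ofReal C ^ 3 * μ (closedBall w (r / 4)) := by
  have hxw : dist x w = r / 2 := by rwa [dist_eq_norm]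
  refine ⟨fun z hz => ?_, ?_⟩
  · have hzxy : ∠ z x y ∈ Icc (π / 3) (π - π / 3) :=
      angle_mem_Icc_of_two_mul_dist_le hw_orth (by linarith [mem_closedBall.mp hz])
    have hsum : ∠ x y z + ∠ y z x + ∠ z x y = π := angle_add_angle_add_angle_eq_pi z hxy.symm
    rw [le_sub_comm]
    refine max_le hzxy.2 ?_
    rw [angle_comm z y x]
    linarith [angle_nonneg y z x, hzxy.1]
  · calc μ (closedBall x r) ≤ μ (closedBall w (2 ^ 3 * (r / 4))) :=
          measure_mono (closedBall_subset_closedBall' (by linarith))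
      _ ≤ ENNReal.ofReal C ^ 3 * μ (closedBall w (r / 4)) :=
          measure_closedBall_two_pow_mul_le (hdbl w) (by positivity) 3

theorem stmt19 (n : ℕ) (hn : 2 ≤ n) (μ : Measure (EuclideanSpace ℝ (Fin n)))
    (C : ℝ) (hC : 1 ≤ C)
    (hdbl : ∀ (c : EuclideanSpace ℝ (Fin n)) (ρ : ℝ), 0 < ρ →
      μ (closedBall c (2 * ρ)) ≤ ENNReal.ofReal C * μ (closedBall c ρ))
    (x y : EuclideanSpace ℝ (Fin n)) (hxy : x ≠ y) (r : ℝ) (hr : 0 < r)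
    (w : EuclideanSpace ℝ (Fin n))
    (hw_orth : (inner ℝ (x - w) (x - y) : ℝ) = 0) (hw_dist : ‖x - w‖ = r / 2) :
    (∀ z ∈ closedBall w (r / 4),
      Real.pi / 3 ≤ Real.pi - max (∠ z x y) (∠ z y x)) ∧
    μ (closedBall x r) ≤ ENNReal.ofReal C ^ 3 * μ (closedBall w (r / 4)) :=
  stmt19_general n μ C hdbl x y hxy r hr w hw_orth hw_dist
end
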